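/- arXiv:math/0402377 — 7 statements merged into one kernel-verified Lean document; each statement's English description precedes it below -/
import Mathlib

section
/- Let (W,S) be a Coxeter system, A a commutative ring, and q : S → A a function such that q_s = q_{s'} whenever s and s' are conjugate in W. Then the free A-module of finitely supported functions W → A, with standard basis (e_w)_{w∈W}, carries a unique structure of an associative unital A-algebra (with A-bilinear multiplication) whose identity element is e_1 and which satisfies, for all s ∈ S and w ∈ W: e_s · e_w = e_{sw} if ℓ(sw) > ℓ(w), and e_s · e_w = q_s·e_{sw} + (q_s − 1)·e_w if ℓ(sw) < ℓ(w). (This algebra is the Hecke algebra A_q[W] of W with multiparameter q.) -/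
/-!
Let `L i` and `R j` be the endomorphisms of `W →₀ A` that the defining rules prescribe for left
multiplication by `e (s i)` and right multiplication by `e (s j)`. They commute. Since both
satisfy `T * T = (q - 1) • T + q • 1`, it suffices to check this on `e w` with `w` a left
ascent for `i` and a right ascent for `j`. Then either `s i * w * s j` has length `ℓ w + 2`
and both sides are `e (s i * w * s j)`, or `s i * w = w * s j`: this dichotomy comes from Tits'
representation of `W` on `W × ZMod 2`, which counts reflections with parity, and in the second
case `s i` and `s j` are conjugate, so `q i = q j` is exactly what makes both sides agree.

Evaluation at `e 1` is injective on the centralizer of the `R j` (walk down along right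
descents) and onto, because the centralizer contains all products of the `L i`. Transporting
the composition of the centralizer along this bijection gives the multiplication. Uniqueness
holds because `e w = e (s i) * e (s i * w)` whenever `s i * w` is shorter than `w`.
-/

open Finsupp

section HeckeOp

variable {X A : Type*} [CommRing A]

/-- Multiplication by the Hecke generator `T_s` with parameter `c`, where `f` is multiplication by
`s` on one side and `len` is the length function. -/
noncomputable def heckeOp (len : X → ℕ) (f : X → X) (c : A) : Module.End A (X →₀ A) :=
  linearCombination A fun x =>
    if len x < len (f x) then single (f x) 1 else c • single (f x) 1 + (c - 1) • single x 1

variable {len : X → ℕ} {f : X → X} {c : A} {x : X}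

theorem heckeOp_single_of_lt (h : len x < len (f x)) :
    heckeOp len f c (single x 1) = single (f x) 1 := by
  simp [heckeOp, h]

theorem heckeOp_single_of_gt (h : len (f x) < len x) :
    heckeOp len f c (single x 1) = c • single (f x) 1 + (c - 1) • single x 1 := by
  simp [heckeOp, h.not_gt]

theorem heckeOp_mul_self (hf : Function.Involutive f) (hlen : ∀ x, len (f x) ≠ len x) :
    heckeOp len f c * heckeOp len f c = (c - 1) • heckeOp len f c + c • 1 := by
  refine Finsupp.basisSingleOne.ext fun x => ?_
  simp only [coe_basisSingleOne, Module.End.mul_apply, LinearMap.add_apply,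
    LinearMap.smul_apply, Module.End.one_apply]
  rcases (hlen x).lt_or_gt with h | h
  · have h' : len (f x) < len (f (f x)) := (hf x).symm ▸ h
    rw [heckeOp_single_of_gt h, map_add, map_smul, map_smul, heckeOp_single_of_lt h',
      heckeOp_single_of_gt h, hf x]
    module
  · have h' : len (f (f x)) < len (f x) := (hf x).symm ▸ h
    rw [heckeOp_single_of_lt h, heckeOp_single_of_gt h', hf x]
    module

theorem Module.End.apply_apply_comm_of_mul_self {M : Type*} [AddCommGroup M] [Module A M]
    {φ ψ : Module.End A M} {a b : A} (hψ : ψ * ψ = a • ψ + b • 1) {m : M}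
    (h : φ (ψ m) = ψ (φ m)) : φ (ψ (ψ m)) = ψ (φ (ψ m)) := by
  have hψ' (m : M) : ψ (ψ m) = a • ψ m + b • m := by
    simpa using LinearMap.congr_fun hψ m
  rw [hψ', map_add, map_smul, map_smul, h, hψ']

end HeckeOp

namespace CoxeterSystem

variable {B W : Type*} [Group W] {M : CoxeterMatrix B} (cs : CoxeterSystem M W)

local prefix:100 "s" => cs.simple
local prefix:100 "π" => cs.wordProd
local prefix:100 "ℓ" => cs.length

theorem simple_induction_left_of_length_lt {P : W → Prop} (one : P 1)
    (mul_simple_left : ∀ w i, ℓ w < ℓ (s i * w) → P w → P (s i * w)) (w : W) : P w := by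
  induction h : ℓ w using Nat.strong_induction_on generalizing w with
  | _ n ih =>
    by_cases hw : w = 1
    · exact hw ▸ one
    obtain ⟨i, hi⟩ := cs.exists_leftDescent_of_ne_one hw
    have hlt : ℓ (s i * w) < ℓ (s i * (s i * w)) := by
      rwa [cs.simple_mul_simple_cancel_left]
    simpa only [cs.simple_mul_simple_cancel_left] using
      mul_simple_left _ i hlt (ih _ (h ▸ hi) _ rfl)

theorem simple_induction_right_of_length_lt {P : W → Prop} (one : P 1)
    (mul_simple_right : ∀ w i, ℓ w < ℓ (w * s i) → P w → P (w * s i)) (w : W) : P w := by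
  simpa using cs.simple_induction_left_of_length_lt (P := fun v => P v⁻¹) (by simpa using one)
    (fun v i h hv => by
      have h' : ℓ v⁻¹ < ℓ (v⁻¹ * s i) := by
        simpa [← cs.length_inv (v⁻¹ * s i), cs.inv_simple] using h
      simpa [cs.inv_simple] using mul_simple_right v⁻¹ i h' hv)
    w⁻¹

section ReflectionParity

open scoped Classical

theorem simple_mul_mul_simple_eq_iff (i : B) (t u : W) :
    s i * t * s i = u ↔ t = s i * u * s i := by
  constructor <;> rintro rfl <;> simp [mul_assoc]

theorem simple_mul_mul_simple_eq_simple_iff (i : B) (t : W) :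
    s i * t * s i = s i ↔ t = s i := by
  rw [simple_mul_mul_simple_eq_iff, cs.simple_mul_simple_self, one_mul]

noncomputable def titsPerm (i : B) : Equiv.Perm (W × ZMod 2) :=
  Function.Involutive.toPerm (fun x => (s i * x.1 * s i, x.2 + if x.1 = s i then 1 else 0))
    (fun ⟨t, e⟩ => by
      simp only [cs.simple_mul_mul_simple_eq_simple_iff, Prod.mk.injEq, add_assoc,
        CharTwo.add_self_eq_zero, add_zero, and_true]
      simp [mul_assoc])

theorem titsPerm_apply (i : B) (t : W) (e : ZMod 2) :
    cs.titsPerm i (t, e) = (s i * t * s i, e + if t = s i then 1 else 0) := rfl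

theorem titsPerm_mul_titsPerm_pow (i j : B) (n : ℕ) (t : W) (e : ZMod 2) :
    ((cs.titsPerm i * cs.titsPerm j) ^ n) (t, e) =
      (((s j * s i) ^ n)⁻¹ * t * (s j * s i) ^ n,
        e + ∑ l ∈ Finset.range (2 * n), if t = (s j * s i) ^ l * s j then 1 else 0) := by
  set p := s j * s i
  have hp : s j * p⁻¹ = p * s j := by simp [p, cs.inv_simple, mul_assoc]
  have hconj (t : W) : s i * (s j * t * s j) * s i = p⁻¹ * t * p := by
    simp [p, cs.inv_simple, mul_assoc]
  have shift (t : W) (l : ℕ) : p⁻¹ * t * p = p ^ l * s j ↔ t = p ^ (l + 2) * s j := by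
    rw [show p ^ (l + 2) * s j = p * (p ^ l * s j) * p⁻¹ by
      rw [mul_assoc _ _ p⁻¹, mul_assoc _ (s j), hp]; group]
    constructor <;> intro h <;> [rw [← h]; rw [h]] <;> group
  induction n generalizing t e with
  | zero => simp
  | succ n ih =>
    simp only [pow_succ, Equiv.Perm.mul_apply, titsPerm_apply, hconj]
    rw [ih, show 2 * (n + 1) = 2 * n + 1 + 1 by ring,
      Finset.sum_range_succ', Finset.sum_range_succ']
    simp only [shift, simple_mul_mul_simple_eq_iff, zero_add, pow_zero, pow_one, one_mul]
    refine Prod.ext (by group) ?_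
    simp only [p]
    ring

theorem isLiftable_titsPerm : M.IsLiftable cs.titsPerm := by
  intro i j
  ext ⟨t, e⟩ : 1
  rw [titsPerm_mul_titsPerm_pow, cs.simple_mul_simple_pow', two_mul, Finset.sum_range_add]
  simp [pow_add, CharTwo.add_self_eq_zero]

noncomputable def titsRep : W →* Equiv.Perm (W × ZMod 2) :=
  cs.lift ⟨cs.titsPerm, cs.isLiftable_titsPerm⟩

noncomputable def reflParity (w t : W) : ZMod 2 := (cs.titsRep w (t, 0)).2

theorem titsRep_apply (w t : W) (e : ZMod 2) :
    cs.titsRep w (t, e) = (w * t * w⁻¹, e + cs.reflParity w t) := by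
  induction w using cs.simple_induction_left generalizing e with
  | one => simp [reflParity]
  | mul_simple_left w i ih =>
    have step (e : ZMod 2) : cs.titsRep (s i * w) (t, e) =
        (s i * (w * t * w⁻¹) * s i, e + cs.reflParity w t +
          if w * t * w⁻¹ = s i then 1 else 0) := by
      rw [map_mul, Equiv.Perm.mul_apply, ih, titsRep, lift_apply_simple, titsPerm_apply]
    have hμ : cs.reflParity (s i * w) t =
        cs.reflParity w t + if w * t * w⁻¹ = s i then 1 else 0 :=
      (congrArg Prod.snd (step 0)).trans (by rw [zero_add])
    rw [step, hμ, add_assoc]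
    simp [cs.inv_simple, mul_assoc]

theorem reflParity_mul (v w t : W) :
    cs.reflParity (v * w) t = cs.reflParity w t + cs.reflParity v (w * t * w⁻¹) := by
  have h := cs.titsRep_apply (v * w) t 0
  rw [map_mul, Equiv.Perm.mul_apply, titsRep_apply, titsRep_apply] at h
  simpa using (congrArg Prod.snd h).symm

theorem reflParity_simple (i : B) (t : W) :
    cs.reflParity (s i) t = if t = s i then 1 else 0 := by
  rw [reflParity, titsRep, lift_apply_simple, titsPerm_apply, zero_add]

theorem reflParity_wordProd (ω : List B) (t : W) :
    cs.reflParity (π ω) t = (cs.rightInvSeq ω).count t := by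
  induction ω with
  | nil => simp [reflParity]
  | cons i ω ih =>
    rw [wordProd_cons, reflParity_mul, ih, reflParity_simple, rightInvSeq, List.count_cons]
    have : π ω * t * (π ω)⁻¹ = s i ↔ (π ω)⁻¹ * s i * π ω = t := by
      constructor <;> intro h <;> [rw [← h]; rw [← h]] <;> group
    simp [this]

theorem reflParity_simple_of_not_isRightDescent {w : W} {j : B}
    (h : ¬ cs.IsRightDescent w j) : cs.reflParity w (s j) = 0 := by
  obtain ⟨ω, hω, rfl⟩ := cs.exists_isReduced w
  rw [reflParity_wordProd, List.count_eq_zero_of_not_mem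
    fun hj => h (cs.isRightInversion_of_mem_rightInvSeq hω hj).2, Nat.cast_zero]

theorem reflParity_simple_of_isRightDescent {w : W} {j : B}
    (h : cs.IsRightDescent w j) : cs.reflParity w (s j) = 1 := by
  have h' : ¬ cs.IsRightDescent (w * s j) j := cs.isRightDescent_iff_not_isRightDescent_mul.mp h
  simpa [reflParity_simple, cs.reflParity_simple_of_not_isRightDescent h'] using
    cs.reflParity_mul (w * s j) (s j) (s j)

theorem mul_simple_mul_inv_eq_simple {w : W} {i j : B} (h₁ : ¬ cs.IsRightDescent w j)
    (h₂ : cs.IsRightDescent (s i * w) j) : w * s j * w⁻¹ = s i := by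
  have := cs.reflParity_mul (s i) w (s j)
  rw [cs.reflParity_simple_of_isRightDescent h₂, cs.reflParity_simple_of_not_isRightDescent h₁,
    reflParity_simple, zero_add] at this
  by_contra hne
  simp [hne] at this

end ReflectionParity

section HeckeAlgebra

variable {A : Type*} [CommRing A] (q : B → A)

noncomputable def heckeLeft (i : B) : Module.End A (W →₀ A) :=
  heckeOp cs.length (s i * ·) (q i)

noncomputable def heckeRight (j : B) : Module.End A (W →₀ A) :=
  heckeOp cs.length (· * s j) (q j)

variable {q}

theorem heckeLeft_single_of_lt {i : B} {w : W} (h : ℓ w < ℓ (s i * w)) :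
    cs.heckeLeft q i (single w 1) = single (s i * w) 1 :=
  heckeOp_single_of_lt h

theorem heckeLeft_single_of_gt {i : B} {w : W} (h : ℓ (s i * w) < ℓ w) :
    cs.heckeLeft q i (single w 1) = q i • single (s i * w) 1 + (q i - 1) • single w 1 :=
  heckeOp_single_of_gt h

theorem heckeRight_single_of_lt {j : B} {w : W} (h : ℓ w < ℓ (w * s j)) :
    cs.heckeRight q j (single w 1) = single (w * s j) 1 :=
  heckeOp_single_of_lt h

theorem heckeRight_single_of_gt {j : B} {w : W} (h : ℓ (w * s j) < ℓ w) :
    cs.heckeRight q j (single w 1) = q j • single (w * s j) 1 + (q j - 1) • single w 1 :=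
  heckeOp_single_of_gt h

theorem heckeLeft_mul_self (i : B) :
    cs.heckeLeft q i * cs.heckeLeft q i = (q i - 1) • cs.heckeLeft q i + q i • 1 :=
  heckeOp_mul_self (fun _ => cs.simple_mul_simple_cancel_left i) (cs.length_simple_mul_ne · i)

theorem heckeRight_mul_self (j : B) :
    cs.heckeRight q j * cs.heckeRight q j = (q j - 1) • cs.heckeRight q j + q j • 1 :=
  heckeOp_mul_self (fun _ => cs.simple_mul_simple_cancel_right j) (cs.length_mul_simple_ne · j)

theorem heckeLeft_heckeRight_single_of_lt_of_lt (hq : ∀ i j, IsConj (s i) (s j) → q i = q j)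
    {i j : B} {w : W} (hi : ℓ w < ℓ (s i * w)) (hj : ℓ w < ℓ (w * s j)) :
    cs.heckeLeft q i (cs.heckeRight q j (single w 1)) =
      cs.heckeRight q j (cs.heckeLeft q i (single w 1)) := by
  rw [heckeRight_single_of_lt cs hj, heckeLeft_single_of_lt cs hi]
  have := cs.length_simple_mul w i
  have := cs.length_mul_simple w j
  rcases cs.length_simple_mul (w * s j) i with h | h
  · rw [heckeLeft_single_of_lt cs (by omega),
      heckeRight_single_of_lt cs (by rw [mul_assoc]; omega), mul_assoc]
  · have hconj := cs.mul_simple_mul_inv_eq_simple (w := w) (i := i) (j := j)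
      (by unfold IsRightDescent; omega) (by unfold IsRightDescent; rw [mul_assoc]; omega)
    have hv : s i * w = w * s j := by rw [← hconj]; group
    rw [← hv, heckeLeft_single_of_gt cs (by rw [cs.simple_mul_simple_cancel_left]; omega),
      heckeRight_single_of_gt cs (by rw [hv, cs.simple_mul_simple_cancel_right]; omega),
      cs.simple_mul_simple_cancel_left, hv, cs.simple_mul_simple_cancel_right,
      hq i j (isConj_iff.mpr ⟨w, hconj⟩).symm]

theorem commute_heckeLeft_heckeRight (hq : ∀ i j, IsConj (s i) (s j) → q i = q j) (i j : B) :
    Commute (cs.heckeLeft q i) (cs.heckeRight q j) := by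
  have asc (w : W) (hi : ℓ w < ℓ (s i * w)) :
      cs.heckeLeft q i (cs.heckeRight q j (single w 1)) =
        cs.heckeRight q j (cs.heckeLeft q i (single w 1)) := by
    rcases cs.length_mul_simple w j with hj | hj
    · exact cs.heckeLeft_heckeRight_single_of_lt_of_lt hq hi (by omega)
    · have hu : ℓ (w * s j) < ℓ (w * s j * s j) := by
        rw [cs.simple_mul_simple_cancel_right]; omega
      have hiu : ℓ (w * s j) < ℓ (s i * (w * s j)) := by
        have := cs.length_simple_mul w i
        have := cs.length_simple_mul (w * s j) i
        have := cs.length_mul_simple (s i * w) j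
        rw [mul_assoc] at this
        omega
      have := Module.End.apply_apply_comm_of_mul_self (cs.heckeRight_mul_self j)
        (cs.heckeLeft_heckeRight_single_of_lt_of_lt hq hiu hu)
      rwa [heckeRight_single_of_lt cs hu, cs.simple_mul_simple_cancel_right] at this
  rw [commute_iff_eq]
  refine Finsupp.basisSingleOne.ext fun w => ?_
  simp only [coe_basisSingleOne, Module.End.mul_apply]
  rcases cs.length_simple_mul w i with hi | hi
  · exact asc w (by omega)
  · have hv : ℓ (s i * w) < ℓ (s i * (s i * w)) := by
      rw [cs.simple_mul_simple_cancel_left]; omega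
    have := (Module.End.apply_apply_comm_of_mul_self (cs.heckeLeft_mul_self i) (asc _ hv).symm).symm
    rwa [heckeLeft_single_of_lt cs hv, cs.simple_mul_simple_cancel_left] at this

variable (q) in
noncomputable def heckeRightCentralizer : Subalgebra A (Module.End A (W →₀ A)) :=
  Subalgebra.centralizer A (Set.range (cs.heckeRight q))

theorem mem_heckeRightCentralizer {φ : Module.End A (W →₀ A)} :
    φ ∈ cs.heckeRightCentralizer q ↔ ∀ j, Commute (cs.heckeRight q j) φ := by
  simp [heckeRightCentralizer, Subalgebra.mem_centralizer_iff, Commute, SemiconjBy]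

theorem eq_of_mem_heckeRightCentralizer {φ ψ : Module.End A (W →₀ A)}
    (hφ : φ ∈ cs.heckeRightCentralizer q) (hψ : ψ ∈ cs.heckeRightCentralizer q)
    (h : φ (single 1 1) = ψ (single 1 1)) : φ = ψ := by
  rw [mem_heckeRightCentralizer] at hφ hψ
  have key : ∀ w, φ (single w 1) = ψ (single w 1) :=
    cs.simple_induction_right_of_length_lt h fun w j hj ih => by
      have hφ' := LinearMap.congr_fun (hφ j).eq (single w 1)
      have hψ' := LinearMap.congr_fun (hψ j).eq (single w 1)
      simp only [Module.End.mul_apply] at hφ' hψ'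
      rw [← heckeRight_single_of_lt cs hj, ← hφ', ← hψ', ih]
  exact Finsupp.basisSingleOne.ext key

theorem heckeLeft_mem_heckeRightCentralizer (hq : ∀ i j, IsConj (s i) (s j) → q i = q j)
    (i : B) : cs.heckeLeft q i ∈ cs.heckeRightCentralizer q :=
  cs.mem_heckeRightCentralizer.mpr fun j => (cs.commute_heckeLeft_heckeRight hq i j).symm

theorem exists_mem_heckeRightCentralizer_apply_one
    (hq : ∀ i j, IsConj (s i) (s j) → q i = q j) (w : W) :
    ∃ φ ∈ cs.heckeRightCentralizer q, φ (single 1 1) = single w 1 := by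
  induction w using cs.simple_induction_left_of_length_lt with
  | one => exact ⟨1, one_mem _, rfl⟩
  | mul_simple_left w i hi ih =>
    obtain ⟨φ, hφ, h⟩ := ih
    refine ⟨cs.heckeLeft q i * φ,
      mul_mem (cs.heckeLeft_mem_heckeRightCentralizer hq i) hφ, ?_⟩
    rw [Module.End.mul_apply, h, heckeLeft_single_of_lt cs hi]

variable (q) in
noncomputable def heckeRightCentralizerEval : cs.heckeRightCentralizer q →ₗ[A] (W →₀ A) :=
  LinearMap.applyₗ (single 1 1) ∘ₗ (cs.heckeRightCentralizer q).val.toLinearMap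

theorem heckeRightCentralizerEval_bijective (hq : ∀ i j, IsConj (s i) (s j) → q i = q j) :
    Function.Bijective (cs.heckeRightCentralizerEval q) := by
  refine ⟨fun φ ψ h => Subtype.ext (cs.eq_of_mem_heckeRightCentralizer φ.2 ψ.2 h), ?_⟩
  rw [← LinearMap.range_eq_top, eq_top_iff, ← Finsupp.basisSingleOne.span_eq, Submodule.span_le]
  rintro _ ⟨w, rfl⟩
  obtain ⟨φ, hφ, h⟩ := cs.exists_mem_heckeRightCentralizer_apply_one hq w
  exact ⟨⟨φ, hφ⟩, h⟩

noncomputable def heckeMul (hq : ∀ i j, IsConj (s i) (s j) → q i = q j) :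
    (W →₀ A) →ₗ[A] Module.End A (W →₀ A) :=
  (cs.heckeRightCentralizer q).val.toLinearMap ∘ₗ
    (LinearEquiv.ofBijective _ (cs.heckeRightCentralizerEval_bijective hq)).symm.toLinearMap

theorem heckeMul_mem (hq : ∀ i j, IsConj (s i) (s j) → q i = q j) (x : W →₀ A) :
    cs.heckeMul hq x ∈ cs.heckeRightCentralizer q :=
  Subtype.property _

theorem heckeMul_apply_one (hq : ∀ i j, IsConj (s i) (s j) → q i = q j) (x : W →₀ A) :
    cs.heckeMul hq x (single 1 1) = x :=
  (LinearEquiv.ofBijective _ (cs.heckeRightCentralizerEval_bijective hq)).apply_symm_apply x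

theorem heckeMul_eq_of_mem (hq : ∀ i j, IsConj (s i) (s j) → q i = q j)
    {φ : Module.End A (W →₀ A)} (hφ : φ ∈ cs.heckeRightCentralizer q) :
    cs.heckeMul hq (φ (single 1 1)) = φ :=
  cs.eq_of_mem_heckeRightCentralizer (cs.heckeMul_mem hq _) hφ (cs.heckeMul_apply_one hq _)

theorem heckeMul_single_one (hq : ∀ i j, IsConj (s i) (s j) → q i = q j) :
    cs.heckeMul hq (single 1 1) = 1 :=
  cs.heckeMul_eq_of_mem hq (one_mem _)

theorem heckeMul_heckeMul (hq : ∀ i j, IsConj (s i) (s j) → q i = q j) (x y : W →₀ A) :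
    cs.heckeMul hq (cs.heckeMul hq x y) = cs.heckeMul hq x * cs.heckeMul hq y := by
  simpa only [Module.End.mul_apply, heckeMul_apply_one] using
    cs.heckeMul_eq_of_mem hq (mul_mem (cs.heckeMul_mem hq x) (cs.heckeMul_mem hq y))

theorem heckeMul_single_simple (hq : ∀ i j, IsConj (s i) (s j) → q i = q j) (i : B) :
    cs.heckeMul hq (single (s i) 1) = cs.heckeLeft q i := by
  simpa [heckeLeft_single_of_lt cs (show ℓ 1 < ℓ (s i * 1) by simp)] using
    cs.heckeMul_eq_of_mem hq (cs.heckeLeft_mem_heckeRightCentralizer hq i)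

theorem eq_heckeLeft_of_single {φ : Module.End A (W →₀ A)} {i : B}
    (hlt : ∀ w, ℓ w < ℓ (s i * w) → φ (single w 1) = single (s i * w) 1)
    (hgt : ∀ w, ℓ (s i * w) < ℓ w →
      φ (single w 1) = q i • single (s i * w) 1 + (q i - 1) • single w 1) :
    φ = cs.heckeLeft q i := by
  refine Finsupp.basisSingleOne.ext fun w => ?_
  simp only [coe_basisSingleOne]
  rcases cs.length_simple_mul w i with h | h
  · rw [hlt w (by omega), heckeLeft_single_of_lt cs (by omega)]
  · rw [hgt w (by omega), heckeLeft_single_of_gt cs (by omega)]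

theorem eq_heckeMul (hq : ∀ i j, IsConj (s i) (s j) → q i = q j)
    {mul : (W →₀ A) →ₗ[A] Module.End A (W →₀ A)}
    (assoc : ∀ x y, mul (mul x y) = mul x * mul y) (one : mul (single 1 1) = 1)
    (simple : ∀ i, mul (single (s i) 1) = cs.heckeLeft q i) : mul = cs.heckeMul hq := by
  have key : ∀ w, mul (single w 1) = cs.heckeMul hq (single w 1) :=
    cs.simple_induction_left_of_length_lt (by rw [one, heckeMul_single_one]) fun w i hi ih => by
      rw [← heckeLeft_single_of_lt cs hi, ← simple, assoc, ih, simple,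
        ← heckeMul_single_simple cs hq, ← heckeMul_heckeMul]
  exact Finsupp.basisSingleOne.ext key

end HeckeAlgebra

end CoxeterSystem

/-- **Existence and uniqueness of the Hecke algebra multiplication.**
Let `(W, S)` be a Coxeter system (with simple reflections indexed by `B`), `A` a commutative
ring, and `q : S → A` a function constant on conjugacy classes of simple reflections.  Then the
free `A`-module `W →₀ A` of finitely supported functions `W → A`, with standard basis
`e w = Finsupp.single w 1`, carries a unique associative, unital, `A`-bilinear multiplication
with identity `e 1` satisfying `e s * e w = e (s*w)` if `ℓ(sw) > ℓ(w)` and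
`e s * e w = q s • e (s*w) + (q s - 1) • e w` if `ℓ(sw) < ℓ(w)`. -/
theorem hecke_algebra_exists_unique {B : Type*} {W : Type*} [Group W] {M : CoxeterMatrix B}
    (cs : CoxeterSystem M W) (A : Type*) [CommRing A] (q : B → A)
    (hq : ∀ i j : B, IsConj (cs.simple i) (cs.simple j) → q i = q j) :
    ∃! mul : (W →₀ A) →ₗ[A] (W →₀ A) →ₗ[A] (W →₀ A),
      (∀ x y z : W →₀ A, mul (mul x y) z = mul x (mul y z)) ∧
      (∀ x : W →₀ A, mul (Finsupp.single 1 1) x = x) ∧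
      (∀ x : W →₀ A, mul x (Finsupp.single 1 1) = x) ∧
      (∀ (i : B) (w : W), cs.length w < cs.length (cs.simple i * w) →
        mul (Finsupp.single (cs.simple i) 1) (Finsupp.single w 1) =
          Finsupp.single (cs.simple i * w) 1) ∧
      (∀ (i : B) (w : W), cs.length (cs.simple i * w) < cs.length w →
        mul (Finsupp.single (cs.simple i) 1) (Finsupp.single w 1) =
          q i • Finsupp.single (cs.simple i * w) 1 + (q i - 1) • Finsupp.single w 1) := by
  refine ⟨cs.heckeMul hq, ⟨fun x y z => ?_, fun x => ?_, cs.heckeMul_apply_one hq,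
    fun i w h => ?_, fun i w h => ?_⟩, ?_⟩
  · rw [cs.heckeMul_heckeMul hq]; rfl
  · rw [cs.heckeMul_single_one hq]; rfl
  · rw [cs.heckeMul_single_simple hq, cs.heckeLeft_single_of_lt h]
  · rw [cs.heckeMul_single_simple hq, cs.heckeLeft_single_of_gt h]
  · rintro mul ⟨assoc, one, -, hlt, hgt⟩
    exact cs.eq_heckeMul hq (fun x y => LinearMap.ext (assoc x y)) (LinearMap.ext one)
      fun i => cs.eq_heckeLeft_of_single (hlt i) (hgt i)
end

section
/- On the Hecke algebra R_q[W], define the inner product ⟨Σ a_w e_w, Σ b_w e_w⟩_q := Σ_w a_w b_w q_w, and let x ↦ x* be the anti-involution with (e_w)* = e_{w⁻¹}. Then for all x, y, z ∈ R_q[W]: (i) ⟨x, y⟩_q = ⟨y*, x*⟩_q, and (ii) ⟨x·y, z⟩_q = ⟨y, x*·z⟩_q. -/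
/-!
The form is diagonal in the basis `e_w` with `⟨e_w, e_w⟩ = q_w`, hence symmetric, and `star` is an
isometry because `q_{w⁻¹} = q_w` (reverse a reduced word); this gives (i).

For (ii) it suffices, by linearity in `x`, to show that left multiplication by `e_w` has adjoint
left multiplication by `e_{w⁻¹}`. For a simple reflection `s` this is a computation on basis
vectors: the only off-diagonal pairing is `⟨e_s e_v, e_{sv}⟩ = q_s q_v` for `ℓ(sv) > ℓ(v)`, in both
orders. In general write `w = s w'` with `ℓ(w) = ℓ(w') + 1`; then `e_w = e_s e_{w'}` and
`e_{w⁻¹} = e_{w'⁻¹} e_s`, and adjoints compose in reverse order.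
-/

open Finsupp

namespace CoxeterSystem

variable {B W : Type*} [Group W] {M : CoxeterMatrix B} (cs : CoxeterSystem M W)

theorem reduced_induction_left {p : W → Prop} (w : W) (one : p 1)
    (simple_mul : ∀ (i : B) (w : W), cs.length w < cs.length (cs.simple i * w) →
      p w → p (cs.simple i * w)) : p w := by
  obtain ⟨ω, hω, rfl⟩ := cs.exists_isReduced w
  induction ω with
  | nil => exact one
  | cons i ω ih =>
    have hω' : cs.IsReduced ω := by simpa using hω.drop 1
    have := hω.eq
    rw [wordProd_cons, List.length_cons, ← hω'.eq] at this
    rw [wordProd_cons]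
    exact simple_mul i _ (by omega) (ih hω')

end CoxeterSystem

noncomputable def heckeForm {W : Type*} (Q : W → ℝ) : (W →₀ ℝ) →ₗ[ℝ] (W →₀ ℝ) →ₗ[ℝ] ℝ :=
  lsum ℝ fun w => LinearMap.smulRight LinearMap.id (Q w • lapply w)

section HeckeForm

variable {W : Type*} (Q : W → ℝ)

theorem heckeForm_apply (x y : W →₀ ℝ) :
    heckeForm Q x y = x.sum fun w a => a * y w * Q w := by
  simp [heckeForm, Finsupp.sum, mul_comm, mul_left_comm]

theorem heckeForm_single_single [DecidableEq W] (u v : W) (a b : ℝ) :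
    heckeForm Q (single u a) (single v b) = if u = v then a * b * Q u else 0 := by
  rw [heckeForm_apply, sum_single_index (by simp), single_apply]
  split_ifs with h h' h' <;> subst_vars <;> simp_all

theorem heckeForm_comm (x y : W →₀ ℝ) : heckeForm Q x y = heckeForm Q y x := by
  classical
  suffices (heckeForm Q).flip = heckeForm Q from (LinearMap.congr_fun₂ this x y).symm
  ext u v
  simp only [LinearMap.comp_apply, lsingle_apply, LinearMap.flip_apply, heckeForm_single_single]
  split_ifs with h h' h' <;> simp_all

theorem heckeForm_mapDomain_inv [Group W] (hQ : ∀ w, Q w⁻¹ = Q w) (x y : W →₀ ℝ) :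
    heckeForm Q (mapDomain Inv.inv x) (mapDomain Inv.inv y) = heckeForm Q x y := by
  classical
  suffices (heckeForm Q).compl₁₂ (lmapDomain ℝ ℝ Inv.inv) (lmapDomain ℝ ℝ Inv.inv) = heckeForm Q from
    LinearMap.congr_fun₂ this x y
  ext u v
  simp only [LinearMap.comp_apply, lsingle_apply, LinearMap.compl₁₂_apply, lmapDomain_apply,
    mapDomain_single, heckeForm_single_single, inv_inj, hQ]

end HeckeForm

section Hecke

variable {B W : Type*} [Group W] {M : CoxeterMatrix B} {cs : CoxeterSystem M W} {q : B → ℝ}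

def IsHeckeWeight (cs : CoxeterSystem M W) (q : B → ℝ) (Q : W → ℝ) : Prop :=
  ∀ ω : List B, cs.IsReduced ω → Q (cs.wordProd ω) = (ω.map q).prod

structure IsHeckeMul (cs : CoxeterSystem M W) (q : B → ℝ)
    (mul : (W →₀ ℝ) →ₗ[ℝ] (W →₀ ℝ) →ₗ[ℝ] (W →₀ ℝ)) : Prop where
  assoc : ∀ x y z, mul (mul x y) z = mul x (mul y z)
  single_one_mul : ∀ x, mul (single 1 1) x = x
  simple_mul_of_length_lt : ∀ (i : B) (w : W), cs.length w < cs.length (cs.simple i * w) →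
    mul (single (cs.simple i) 1) (single w 1) = single (cs.simple i * w) 1
  simple_mul_of_length_gt : ∀ (i : B) (w : W), cs.length (cs.simple i * w) < cs.length w →
    mul (single (cs.simple i) 1) (single w 1) =
      q i • single (cs.simple i * w) 1 + (q i - 1) • single w 1

namespace IsHeckeWeight

variable {Q : W → ℝ}

theorem inv (hQ : IsHeckeWeight cs q Q) (w : W) : Q w⁻¹ = Q w := by
  obtain ⟨ω, hω, rfl⟩ := cs.exists_isReduced w
  rw [← cs.wordProd_reverse, hQ _ hω.reverse, hQ ω hω, List.map_reverse, List.prod_reverse]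

theorem simple_mul (hQ : IsHeckeWeight cs q Q) {i : B} {w : W}
    (h : cs.length w < cs.length (cs.simple i * w)) : Q (cs.simple i * w) = q i * Q w := by
  obtain ⟨ω, hω, rfl⟩ := cs.exists_isReduced w
  have hiω : cs.IsReduced (i :: ω) := by
    have := cs.length_simple_mul (cs.wordProd ω) i
    rw [CoxeterSystem.IsReduced, cs.wordProd_cons, List.length_cons, ← hω.eq]
    omega
  rw [← cs.wordProd_cons, hQ _ hiω, hQ ω hω, List.map_cons, List.prod_cons]

end IsHeckeWeight

namespace IsHeckeMul

variable {mul : (W →₀ ℝ) →ₗ[ℝ] (W →₀ ℝ) →ₗ[ℝ] (W →₀ ℝ)}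

theorem single_mul_single_of_length_mul (hmul : IsHeckeMul cs q mul) (u : W) :
    ∀ v, cs.length (u * v) = cs.length u + cs.length v →
      mul (single u 1) (single v 1) = single (u * v) 1 := by
  induction u using cs.reduced_induction_left with
  | one => intro v _; rw [hmul.single_one_mul, one_mul]
  | simple_mul i u hu ih =>
    intro v huv
    have hiu := cs.length_simple_mul u i
    have h1 := cs.length_mul_le u v
    have h2 := cs.length_mul_le (cs.simple i) (u * v)
    rw [cs.length_simple, ← mul_assoc] at h2
    rw [← hmul.simple_mul_of_length_lt i u hu, hmul.assoc, ih v (by omega),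
      hmul.simple_mul_of_length_lt i (u * v) (by rw [← mul_assoc]; omega), mul_assoc]

theorem heckeForm_simple_mul_single_eq_zero {Q : W → ℝ} (hmul : IsHeckeMul cs q mul) {i : B}
    {v w : W} (hvw : v ≠ w) (hsvw : cs.simple i * v ≠ w) :
    heckeForm Q (mul (single (cs.simple i) 1) (single v 1)) (single w 1) = 0 := by
  classical
  rcases lt_or_gt_of_ne (cs.length_simple_mul_ne v i) with hv | hv
  · simp [hmul.simple_mul_of_length_gt i v hv, heckeForm_single_single, hvw, hsvw]
  · simp [hmul.simple_mul_of_length_lt i v hv, heckeForm_single_single, hsvw]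

theorem heckeForm_simple_mul_single_simple_mul_comm {Q : W → ℝ}
    (hmul : IsHeckeMul cs q mul) (hQ : IsHeckeWeight cs q Q) {i : B} {v : W}
    (hv : cs.length v < cs.length (cs.simple i * v)) :
    heckeForm Q (mul (single (cs.simple i) 1) (single v 1)) (single (cs.simple i * v) 1) =
      heckeForm Q (mul (single (cs.simple i) 1) (single (cs.simple i * v) 1)) (single v 1) := by
  classical
  have hsv : cs.length (cs.simple i * (cs.simple i * v)) < cs.length (cs.simple i * v) := by
    rwa [cs.simple_mul_simple_cancel_left]
  have hne : cs.simple i * v ≠ v := fun h => (h ▸ hv).false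
  rw [hmul.simple_mul_of_length_lt i v hv, hmul.simple_mul_of_length_gt i _ hsv,
    cs.simple_mul_simple_cancel_left]
  simp [heckeForm_single_single, hne, hQ.simple_mul hv]

theorem heckeForm_simple_mul_single_comm {Q : W → ℝ} (hmul : IsHeckeMul cs q mul)
    (hQ : IsHeckeWeight cs q Q) (i : B) (v w : W) :
    heckeForm Q (mul (single (cs.simple i) 1) (single v 1)) (single w 1) =
      heckeForm Q (mul (single (cs.simple i) 1) (single w 1)) (single v 1) := by
  by_cases hvw : v = w
  · rw [hvw]
  by_cases hsvw : cs.simple i * v = w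
  · subst hsvw
    rcases lt_or_gt_of_ne (cs.length_simple_mul_ne v i) with hv | hv
    · have hsv : cs.length (cs.simple i * v) < cs.length (cs.simple i * (cs.simple i * v)) := by
        rwa [cs.simple_mul_simple_cancel_left]
      have := heckeForm_simple_mul_single_simple_mul_comm hmul hQ hsv
      rw [cs.simple_mul_simple_cancel_left] at this
      exact this.symm
    · exact heckeForm_simple_mul_single_simple_mul_comm hmul hQ hv
  have hswv : cs.simple i * w ≠ v := by
    rintro rfl
    exact hsvw (cs.simple_mul_simple_cancel_left i)
  rw [heckeForm_simple_mul_single_eq_zero hmul hvw hsvw,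
    heckeForm_simple_mul_single_eq_zero hmul (Ne.symm hvw) hswv]

theorem isAdjointPair_simple {Q : W → ℝ} (hmul : IsHeckeMul cs q mul)
    (hQ : IsHeckeWeight cs q Q) (i : B) :
    LinearMap.IsAdjointPair (heckeForm Q) (heckeForm Q)
      (mul (single (cs.simple i) 1)) (mul (single (cs.simple i) 1)) := by
  rw [LinearMap.isAdjointPair_iff_comp_eq_compl₂]
  ext v w
  simp only [LinearMap.comp_apply, LinearMap.compl₂_apply, lsingle_apply]
  rw [heckeForm_comm Q (single v 1)]
  exact heckeForm_simple_mul_single_comm hmul hQ i v w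

theorem isAdjointPair_single {Q : W → ℝ} (hmul : IsHeckeMul cs q mul)
    (hQ : IsHeckeWeight cs q Q) (u : W) :
    LinearMap.IsAdjointPair (heckeForm Q) (heckeForm Q)
      (mul (single u 1)) (mul (single u⁻¹ 1)) := by
  induction u using cs.reduced_induction_left with
  | one =>
    rw [inv_one, show ⇑(mul (single 1 1)) = id from funext hmul.single_one_mul]
    exact LinearMap.isAdjointPair_id
  | simple_mul i u hu ih =>
    have hleft : ⇑(mul (single (cs.simple i * u) 1)) =
        mul (single (cs.simple i) 1) ∘ mul (single u 1) := by
      funext x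
      rw [← hmul.simple_mul_of_length_lt i u hu, hmul.assoc, Function.comp_apply]
    have hlen : cs.length (u⁻¹ * cs.simple i) = cs.length u⁻¹ + cs.length (cs.simple i) := by
      rw [show u⁻¹ * cs.simple i = (cs.simple i * u)⁻¹ by rw [mul_inv_rev, cs.inv_simple],
        cs.length_inv, cs.length_inv, cs.length_simple]
      have := cs.length_simple_mul u i
      omega
    have hright : ⇑(mul (single (cs.simple i * u)⁻¹ 1)) =
        mul (single u⁻¹ 1) ∘ mul (single (cs.simple i) 1) := by
      funext x
      rw [mul_inv_rev, cs.inv_simple, ← hmul.single_mul_single_of_length_mul _ _ hlen,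
        hmul.assoc, Function.comp_apply]
    rw [hleft, hright]
    exact ih.comp (hmul.isAdjointPair_simple hQ i)

theorem isAdjointPair_mapDomain_inv {Q : W → ℝ} (hmul : IsHeckeMul cs q mul)
    (hQ : IsHeckeWeight cs q Q) (x : W →₀ ℝ) :
    LinearMap.IsAdjointPair (heckeForm Q) (heckeForm Q)
      (mul x) (mul (mapDomain Inv.inv x)) := by
  induction x using Finsupp.induction_linear with
  | zero =>
    rw [mapDomain_zero, map_zero]
    exact LinearMap.isAdjointPair_zero
  | add x y hx hy =>
    rw [mapDomain_add, map_add, map_add]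
    exact hx.add hy
  | single u a =>
    rw [← smul_single_one, mapDomain_smul, mapDomain_single, map_smul, map_smul]
    exact (hmul.isAdjointPair_single hQ u).smul a

end IsHeckeMul

end Hecke

theorem hecke_inner_star_adjoint_general {B : Type*} {W : Type*} [Group W] {M : CoxeterMatrix B}
    (cs : CoxeterSystem M W) (q : B → ℝ)
    (Q : W → ℝ)
    (hQ : ∀ ω : List B, cs.IsReduced ω → Q (cs.wordProd ω) = (ω.map q).prod)
    (mul : (W →₀ ℝ) →ₗ[ℝ] (W →₀ ℝ) →ₗ[ℝ] (W →₀ ℝ))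
    (hassoc : ∀ x y z : W →₀ ℝ, mul (mul x y) z = mul x (mul y z))
    (hone : ∀ x : W →₀ ℝ, mul (Finsupp.single 1 1) x = x)
    (hgt : ∀ (i : B) (w : W), cs.length w < cs.length (cs.simple i * w) →
      mul (Finsupp.single (cs.simple i) 1) (Finsupp.single w 1) =
        Finsupp.single (cs.simple i * w) 1)
    (hlt : ∀ (i : B) (w : W), cs.length (cs.simple i * w) < cs.length w →
      mul (Finsupp.single (cs.simple i) 1) (Finsupp.single w 1) =
        q i • Finsupp.single (cs.simple i * w) 1 + (q i - 1) • Finsupp.single w 1)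
    (inner : (W →₀ ℝ) → (W →₀ ℝ) → ℝ)
    (hinner : ∀ x y : W →₀ ℝ, inner x y = x.sum fun w a => a * y w * Q w)
    (star : (W →₀ ℝ) → (W →₀ ℝ))
    (hstar : ∀ x : W →₀ ℝ, star x = Finsupp.mapDomain (fun w : W => w⁻¹) x) :
    (∀ x y : W →₀ ℝ, inner x y = inner (star y) (star x)) ∧
      (∀ x y z : W →₀ ℝ, inner (mul x y) z = inner y (mul (star x) z)) := by
  have hmul : IsHeckeMul cs q mul := ⟨hassoc, hone, hgt, hlt⟩
  have hinner' : ∀ x y, inner x y = heckeForm Q x y := fun x y => by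
    rw [hinner, heckeForm_apply]
  simp only [hinner', hstar]
  refine ⟨fun x y => ?_, fun x y z => ?_⟩
  · rw [heckeForm_mapDomain_inv Q (IsHeckeWeight.inv hQ), heckeForm_comm]
  · exact hmul.isAdjointPair_mapDomain_inv hQ x y z

/-- **The Hecke inner product, the star map and multiplication.**
On the Hecke algebra `R_q[W]` define `⟨Σ a_w e_w, Σ b_w e_w⟩_q := Σ_w a_w b_w q_w`
(where `q_w = q_{s₁} ⋯ q_{s_k}` for a reduced word `s₁ ⋯ s_k` of `w`; we encode this by a
function `Q : W → ℝ` with `Q (π ω) = Π q` over every reduced word `ω`), and let `x ↦ x*`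
be the anti-involution determined by `(e w)* = e w⁻¹`.  Then for all `x, y, z`:
(i) `⟨x, y⟩_q = ⟨y*, x*⟩_q`, and (ii) `⟨x·y, z⟩_q = ⟨y, x*·z⟩_q`. -/
theorem hecke_inner_star_adjoint {B : Type*} {W : Type*} [Group W] {M : CoxeterMatrix B}
    (cs : CoxeterSystem M W) (q : B → ℝ)
    (hq0 : ∀ i : B, 0 < q i)
    (hqconj : ∀ i j : B, IsConj (cs.simple i) (cs.simple j) → q i = q j)
    (Q : W → ℝ)
    (hQ : ∀ ω : List B, cs.IsReduced ω → Q (cs.wordProd ω) = (ω.map q).prod)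
    (mul : (W →₀ ℝ) →ₗ[ℝ] (W →₀ ℝ) →ₗ[ℝ] (W →₀ ℝ))
    (hassoc : ∀ x y z : W →₀ ℝ, mul (mul x y) z = mul x (mul y z))
    (hone : ∀ x : W →₀ ℝ, mul (Finsupp.single 1 1) x = x)
    (hone' : ∀ x : W →₀ ℝ, mul x (Finsupp.single 1 1) = x)
    (hgt : ∀ (i : B) (w : W), cs.length w < cs.length (cs.simple i * w) →
      mul (Finsupp.single (cs.simple i) 1) (Finsupp.single w 1) =
        Finsupp.single (cs.simple i * w) 1)
    (hlt : ∀ (i : B) (w : W), cs.length (cs.simple i * w) < cs.length w →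
      mul (Finsupp.single (cs.simple i) 1) (Finsupp.single w 1) =
        q i • Finsupp.single (cs.simple i * w) 1 + (q i - 1) • Finsupp.single w 1)
    (inner : (W →₀ ℝ) → (W →₀ ℝ) → ℝ)
    (hinner : ∀ x y : W →₀ ℝ, inner x y = x.sum fun w a => a * y w * Q w)
    (star : (W →₀ ℝ) → (W →₀ ℝ))
    (hstar : ∀ x : W →₀ ℝ, star x = Finsupp.mapDomain (fun w : W => w⁻¹) x) :
    (∀ x y : W →₀ ℝ, inner x y = inner (star y) (star x)) ∧
      (∀ x y z : W →₀ ℝ, inner (mul x y) z = inner y (mul (star x) z)) :=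
  hecke_inner_star_adjoint_general cs q Q hQ mul hassoc hone hgt hlt inner hinner star hstar
end

section
/- Let q : S → ℝ with q_s > 0 and q_s = q_{s'} whenever s and s' are conjugate in W, and let q⁻¹ : S → ℝ be s ↦ q_s⁻¹. The ℝ-linear map j_q : R_q[W] → R_{q⁻¹}[W] determined on basis elements by j_q(e_w) := (−1)^{ℓ(w)} q_w e_w is an ℝ-algebra isomorphism, and its inverse is the analogously defined map j_{q⁻¹} : R_{q⁻¹}[W] → R_q[W]. -/
/-!
The Hecke algebra is generated by the `e_s`, and `e_v = e_s e_{sv}` whenever `ℓ(sv) < ℓ(v)`,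
so by induction along a reduced word `j_q` is multiplicative as soon as
`j_q(e_s e_w) = j_q(e_s) j_q(e_w)`. Both sides are compared in the two cases `ℓ(sw) ≷ ℓ(w)`;
the only input is `q_{sw} = q_s q_w` and `(-1)^{ℓ(sw)} = -(-1)^{ℓ(w)}` when `ℓ(sw) > ℓ(w)`.
Finally `j_{q⁻¹} ∘ j_q` and `j_q ∘ j_{q⁻¹}` act on `e_w` by `(-1)^{2ℓ(w)} q_w q_w⁻¹ = 1`.
-/

open Finsupp

theorem Finsupp.comp_eq_id_of_apply_single {α R : Type*} [CommSemiring R]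
    (f g : (α →₀ R) →ₗ[R] (α →₀ R)) (a b : α → R)
    (hf : ∀ x, f (single x 1) = a x • single x 1)
    (hg : ∀ x, g (single x 1) = b x • single x 1)
    (hab : ∀ x, a x * b x = 1) : g ∘ₗ f = LinearMap.id :=
  Finsupp.basisSingleOne.ext fun x => by
    rw [coe_basisSingleOne, LinearMap.comp_apply, hf, map_smul, hg, smul_smul, hab, one_smul]
    rfl

namespace CoxeterSystem

variable {B W : Type*} [Group W] {M : CoxeterMatrix B} (cs : CoxeterSystem M W)

theorem isReduced_cons_iff (i : B) (ω : List B) :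
    cs.IsReduced (i :: ω) ↔ cs.IsReduced ω ∧
      cs.length (cs.wordProd ω) < cs.length (cs.simple i * cs.wordProd ω) := by
  unfold IsReduced
  rw [wordProd_cons, List.length_cons]
  have := cs.length_wordProd_le ω
  rcases cs.length_simple_mul (cs.wordProd ω) i with h | h <;> omega

theorem neg_one_pow_length_simple_mul {R : Type*} [Ring R] (i : B) (w : W) :
    (-1 : R) ^ cs.length (cs.simple i * w) = -(-1) ^ cs.length w := by
  rcases cs.length_simple_mul w i with h | h
  · rw [h, pow_succ, mul_neg_one]
  · rw [← h, pow_succ, mul_neg_one, neg_neg]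

/-- `Q` is the paper's `w ↦ q_w`. -/
def IsMultiplicativeExtension {R : Type*} [CommMonoid R] (q : B → R) (Q : W → R) : Prop :=
  ∀ ω : List B, cs.IsReduced ω → Q (cs.wordProd ω) = (ω.map q).prod

namespace IsMultiplicativeExtension

variable {cs} {R : Type*} [CommMonoid R] {q : B → R} {Q : W → R}

theorem apply_one (hQ : cs.IsMultiplicativeExtension q Q) : Q 1 = 1 := by
  simpa using hQ [] (by simp [IsReduced])

theorem apply_simple_mul (hQ : cs.IsMultiplicativeExtension q Q) {i : B} {w : W}
    (hw : cs.length w < cs.length (cs.simple i * w)) : Q (cs.simple i * w) = q i * Q w := by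
  obtain ⟨ω, hω, rfl⟩ := cs.exists_isReduced w
  rw [← wordProd_cons, hQ _ ((cs.isReduced_cons_iff i ω).2 ⟨hω, hw⟩), hQ ω hω,
    List.map_cons, List.prod_cons]

theorem apply_simple (hQ : cs.IsMultiplicativeExtension q Q) (i : B) :
    Q (cs.simple i) = q i := by
  simpa [hQ.apply_one] using hQ.apply_simple_mul (i := i) (w := 1) (by simp)

theorem ne_zero {R : Type*} [CommMonoidWithZero R] [NoZeroDivisors R] [Nontrivial R]
    {q : B → R} {Q : W → R} (hQ : cs.IsMultiplicativeExtension q Q) (hq : ∀ i, q i ≠ 0)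
    (w : W) : Q w ≠ 0 := by
  obtain ⟨ω, hω, rfl⟩ := cs.exists_isReduced w
  rw [hQ ω hω]
  exact List.prod_ne_zero (by simpa using fun i _ => hq i)

theorem signed_apply_simple_mul {R : Type*} [CommRing R] {q : B → R} {Q : W → R}
    (hQ : cs.IsMultiplicativeExtension q Q) {i : B} {w : W}
    (hw : cs.length w < cs.length (cs.simple i * w)) :
    (-1) ^ cs.length (cs.simple i * w) * Q (cs.simple i * w) =
      -q i * ((-1) ^ cs.length w * Q w) := by
  rw [cs.neg_one_pow_length_simple_mul, hQ.apply_simple_mul hw]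
  ring

end IsMultiplicativeExtension

theorem map_mul_of_map_simple_mul_single {R : Type*} [CommSemiring R]
    (mul mul' : (W →₀ R) →ₗ[R] (W →₀ R) →ₗ[R] (W →₀ R))
    (f : (W →₀ R) →ₗ[R] (W →₀ R))
    (hassoc : ∀ x y z, mul (mul x y) z = mul x (mul y z))
    (hone : ∀ x, mul (single 1 1) x = x)
    (hgt : ∀ (i : B) (w : W), cs.length w < cs.length (cs.simple i * w) →
      mul (single (cs.simple i) 1) (single w 1) = single (cs.simple i * w) 1)
    (hassoc' : ∀ x y z, mul' (mul' x y) z = mul' x (mul' y z))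
    (h'one : ∀ x, mul' (single 1 1) x = x)
    (hf1 : f (single 1 1) = single 1 1)
    (hfs : ∀ (i : B) (w : W),
      f (mul (single (cs.simple i) 1) (single w 1)) =
        mul' (f (single (cs.simple i) 1)) (f (single w 1)))
    (x y : W →₀ R) : f (mul x y) = mul' (f x) (f y) := by
  have hsimple (i : B) (y : W →₀ R) :
      f (mul (single (cs.simple i) 1) y) = mul' (f (single (cs.simple i) 1)) (f y) :=
    LinearMap.congr_fun (f := f ∘ₗ mul (single (cs.simple i) 1))
      (g := mul' (f (single (cs.simple i) 1)) ∘ₗ f)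
      (Finsupp.basisSingleOne.ext (by simpa using hfs i)) y
  have hreduced (ω : List B) (hω : cs.IsReduced ω) (y : W →₀ R) :
      f (mul (single (cs.wordProd ω) 1) y) = mul' (f (single (cs.wordProd ω) 1)) (f y) := by
    induction ω generalizing y with
    | nil => simp [hone, hf1, h'one]
    | cons i ω ih =>
      obtain ⟨hω, hlt⟩ := (cs.isReduced_cons_iff i ω).1 hω
      rw [wordProd_cons, ← hgt i _ hlt, hassoc, hsimple, ih hω, ← hassoc', ← hsimple]
  have hbilin : mul.compr₂ f = (mul'.comp f).compl₂ f :=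
    Finsupp.basisSingleOne.ext fun v => LinearMap.ext fun y => by
      obtain ⟨ω, hω, rfl⟩ := cs.exists_isReduced v
      simpa using hreduced ω hω y
  exact LinearMap.congr_fun₂ hbilin x y

theorem hecke_j_map_simple_mul_single {K : Type*} [Field K] {q : B → K} {Q : W → K}
    (hQ : cs.IsMultiplicativeExtension q Q)
    (mul mul' : (W →₀ K) →ₗ[K] (W →₀ K) →ₗ[K] (W →₀ K))
    (j : (W →₀ K) →ₗ[K] (W →₀ K))
    (hgt : ∀ (i : B) (w : W), cs.length w < cs.length (cs.simple i * w) →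
      mul (single (cs.simple i) 1) (single w 1) = single (cs.simple i * w) 1)
    (hlt : ∀ (i : B) (w : W), cs.length (cs.simple i * w) < cs.length w →
      mul (single (cs.simple i) 1) (single w 1) =
        q i • single (cs.simple i * w) 1 + (q i - 1) • single w 1)
    (hgt' : ∀ (i : B) (w : W), cs.length w < cs.length (cs.simple i * w) →
      mul' (single (cs.simple i) 1) (single w 1) = single (cs.simple i * w) 1)
    (hlt' : ∀ (i : B) (w : W), cs.length (cs.simple i * w) < cs.length w →
      mul' (single (cs.simple i) 1) (single w 1) =
        (q i)⁻¹ • single (cs.simple i * w) 1 + ((q i)⁻¹ - 1) • single w 1)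
    (hj : ∀ w : W, j (single w 1) = ((-1 : K) ^ cs.length w * Q w) • single w 1)
    {i : B} (hq : q i ≠ 0) (w : W) :
    j (mul (single (cs.simple i) 1) (single w 1)) =
      mul' (j (single (cs.simple i) 1)) (j (single w 1)) := by
  have hji : j (single (cs.simple i) 1) = (-q i) • single (cs.simple i) 1 := by
    rw [hj, cs.length_simple, hQ.apply_simple, pow_one, neg_one_mul]
  rcases lt_or_gt_of_ne (cs.length_simple_mul_ne w i) with hdown | hup
  · obtain ⟨u, rfl⟩ : ∃ u, w = cs.simple i * u := ⟨cs.simple i * w, by simp [← mul_assoc]⟩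
    have hup : cs.length u < cs.length (cs.simple i * u) := by
      rwa [cs.simple_mul_simple_cancel_left] at hdown
    rw [hlt i _ hdown, hji]
    simp only [map_add, map_smul, LinearMap.smul_apply, hj]
    rw [hlt' i _ hdown, cs.simple_mul_simple_cancel_left, hQ.signed_apply_simple_mul hup]
    match_scalars <;> field_simp
    ring
  · rw [hgt i w hup, hji]
    simp only [map_smul, LinearMap.smul_apply, hj]
    rw [hgt' i w hup, hQ.signed_apply_simple_mul hup]
    module

end CoxeterSystem

theorem hecke_j_isomorphism_general {B : Type*} {W : Type*} [Group W] {M : CoxeterMatrix B}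
    (cs : CoxeterSystem M W) (q : B → ℝ)
    (hq0 : ∀ i : B, 0 < q i)
    (Q : W → ℝ)
    (hQ : ∀ ω : List B, cs.IsReduced ω → Q (cs.wordProd ω) = (ω.map q).prod)
    -- the Hecke multiplication for the multiparameter `q`
    (mul : (W →₀ ℝ) →ₗ[ℝ] (W →₀ ℝ) →ₗ[ℝ] (W →₀ ℝ))
    (hassoc : ∀ x y z : W →₀ ℝ, mul (mul x y) z = mul x (mul y z))
    (hone : ∀ x : W →₀ ℝ, mul (Finsupp.single 1 1) x = x)
    (hgt : ∀ (i : B) (w : W), cs.length w < cs.length (cs.simple i * w) →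
      mul (Finsupp.single (cs.simple i) 1) (Finsupp.single w 1) =
        Finsupp.single (cs.simple i * w) 1)
    (hlt : ∀ (i : B) (w : W), cs.length (cs.simple i * w) < cs.length w →
      mul (Finsupp.single (cs.simple i) 1) (Finsupp.single w 1) =
        q i • Finsupp.single (cs.simple i * w) 1 + (q i - 1) • Finsupp.single w 1)
    -- the Hecke multiplication for the multiparameter `q⁻¹`
    (mul' : (W →₀ ℝ) →ₗ[ℝ] (W →₀ ℝ) →ₗ[ℝ] (W →₀ ℝ))
    (hassoc' : ∀ x y z : W →₀ ℝ, mul' (mul' x y) z = mul' x (mul' y z))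
    (h'one : ∀ x : W →₀ ℝ, mul' (Finsupp.single 1 1) x = x)
    (hgt' : ∀ (i : B) (w : W), cs.length w < cs.length (cs.simple i * w) →
      mul' (Finsupp.single (cs.simple i) 1) (Finsupp.single w 1) =
        Finsupp.single (cs.simple i * w) 1)
    (hlt' : ∀ (i : B) (w : W), cs.length (cs.simple i * w) < cs.length w →
      mul' (Finsupp.single (cs.simple i) 1) (Finsupp.single w 1) =
        (q i)⁻¹ • Finsupp.single (cs.simple i * w) 1 +
          ((q i)⁻¹ - 1) • Finsupp.single w 1)
    -- the maps `j_q` and `j_{q⁻¹}`, given as linear maps by their values on basis elements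
    (j j' : (W →₀ ℝ) →ₗ[ℝ] (W →₀ ℝ))
    (hj : ∀ w : W, j (Finsupp.single w 1) =
      ((-1 : ℝ) ^ cs.length w * Q w) • Finsupp.single w 1)
    (hj' : ∀ w : W, j' (Finsupp.single w 1) =
      ((-1 : ℝ) ^ cs.length w * (Q w)⁻¹) • Finsupp.single w 1) :
    j (Finsupp.single 1 1) = Finsupp.single 1 1 ∧
      (∀ x y : W →₀ ℝ, j (mul x y) = mul' (j x) (j y)) ∧
      (∀ x : W →₀ ℝ, j' (j x) = x) ∧
      (∀ x : W →₀ ℝ, j (j' x) = x) := by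
  have hQext : cs.IsMultiplicativeExtension q Q := hQ
  have hj1 : j (single 1 1) = single 1 1 := by
    rw [hj, cs.length_one, hQext.apply_one, pow_zero, one_mul, one_smul]
  have hinv (w : W) : ((-1 : ℝ) ^ cs.length w * Q w) * ((-1) ^ cs.length w * (Q w)⁻¹) = 1 := by
    rw [mul_mul_mul_comm, ← pow_add, Even.neg_one_pow ⟨_, rfl⟩, one_mul,
      mul_inv_cancel₀ (hQext.ne_zero (fun i => (hq0 i).ne') w)]
  refine ⟨hj1, cs.map_mul_of_map_simple_mul_single mul mul' j hassoc hone hgt hassoc' h'one hj1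
    fun i => cs.hecke_j_map_simple_mul_single hQext mul mul' j hgt hlt hgt' hlt' hj (hq0 i).ne',
    fun x => ?_, fun x => ?_⟩
  · exact LinearMap.congr_fun (comp_eq_id_of_apply_single j j' _ _ hj hj' hinv) x
  · exact LinearMap.congr_fun
      (comp_eq_id_of_apply_single j' j _ _ hj' hj fun w => (mul_comm _ _).trans (hinv w)) x

/-- **The `j`-isomorphism of Hecke algebras.**
Let `q : S → ℝ` be positive and constant on conjugacy classes, with `q⁻¹ : s ↦ (q s)⁻¹`.
Let `mul` be the Hecke multiplication for `q` and `mul'` the Hecke multiplication for `q⁻¹`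
on `W →₀ ℝ`.  Then the `ℝ`-linear map `j = j_q` determined on basis elements by
`j (e w) = (-1)^{ℓ w} q_w • e w` is an `ℝ`-algebra isomorphism `R_q[W] ≅ R_{q⁻¹}[W]`:
it sends `1` to `1`, it is multiplicative, and the analogously defined map
`j' = j_{q⁻¹}` (with `j' (e w) = (-1)^{ℓ w} (q_w)⁻¹ • e w`) is its two-sided inverse. -/
theorem hecke_j_isomorphism {B : Type*} {W : Type*} [Group W] {M : CoxeterMatrix B}
    (cs : CoxeterSystem M W) (q : B → ℝ)
    (hq0 : ∀ i : B, 0 < q i)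
    (hqconj : ∀ i j : B, IsConj (cs.simple i) (cs.simple j) → q i = q j)
    (Q : W → ℝ)
    (hQ : ∀ ω : List B, cs.IsReduced ω → Q (cs.wordProd ω) = (ω.map q).prod)
    -- the Hecke multiplication for the multiparameter `q`
    (mul : (W →₀ ℝ) →ₗ[ℝ] (W →₀ ℝ) →ₗ[ℝ] (W →₀ ℝ))
    (hassoc : ∀ x y z : W →₀ ℝ, mul (mul x y) z = mul x (mul y z))
    (hone : ∀ x : W →₀ ℝ, mul (Finsupp.single 1 1) x = x)
    (hone' : ∀ x : W →₀ ℝ, mul x (Finsupp.single 1 1) = x)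
    (hgt : ∀ (i : B) (w : W), cs.length w < cs.length (cs.simple i * w) →
      mul (Finsupp.single (cs.simple i) 1) (Finsupp.single w 1) =
        Finsupp.single (cs.simple i * w) 1)
    (hlt : ∀ (i : B) (w : W), cs.length (cs.simple i * w) < cs.length w →
      mul (Finsupp.single (cs.simple i) 1) (Finsupp.single w 1) =
        q i • Finsupp.single (cs.simple i * w) 1 + (q i - 1) • Finsupp.single w 1)
    -- the Hecke multiplication for the multiparameter `q⁻¹`
    (mul' : (W →₀ ℝ) →ₗ[ℝ] (W →₀ ℝ) →ₗ[ℝ] (W →₀ ℝ))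
    (hassoc' : ∀ x y z : W →₀ ℝ, mul' (mul' x y) z = mul' x (mul' y z))
    (h'one : ∀ x : W →₀ ℝ, mul' (Finsupp.single 1 1) x = x)
    (h'one' : ∀ x : W →₀ ℝ, mul' x (Finsupp.single 1 1) = x)
    (hgt' : ∀ (i : B) (w : W), cs.length w < cs.length (cs.simple i * w) →
      mul' (Finsupp.single (cs.simple i) 1) (Finsupp.single w 1) =
        Finsupp.single (cs.simple i * w) 1)
    (hlt' : ∀ (i : B) (w : W), cs.length (cs.simple i * w) < cs.length w →
      mul' (Finsupp.single (cs.simple i) 1) (Finsupp.single w 1) =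
        (q i)⁻¹ • Finsupp.single (cs.simple i * w) 1 +
          ((q i)⁻¹ - 1) • Finsupp.single w 1)
    -- the maps `j_q` and `j_{q⁻¹}`, given as linear maps by their values on basis elements
    (j j' : (W →₀ ℝ) →ₗ[ℝ] (W →₀ ℝ))
    (hj : ∀ w : W, j (Finsupp.single w 1) =
      ((-1 : ℝ) ^ cs.length w * Q w) • Finsupp.single w 1)
    (hj' : ∀ w : W, j' (Finsupp.single w 1) =
      ((-1 : ℝ) ^ cs.length w * (Q w)⁻¹) • Finsupp.single w 1) :
    j (Finsupp.single 1 1) = Finsupp.single 1 1 ∧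
      (∀ x y : W →₀ ℝ, j (mul x y) = mul' (j x) (j y)) ∧
      (∀ x : W →₀ ℝ, j' (j x) = x) ∧
      (∀ x : W →₀ ℝ, j (j' x) = x) :=
  hecke_j_isomorphism_general cs q hq0 Q hQ mul hassoc hone hgt hlt mul' hassoc' h'one hgt' hlt' j
    j' hj hj'
end

section
/- Let U, V ⊆ S be spherical subsets with U ∩ V ≠ ∅. Then in the Hecke algebra R_q[W], with h̃_U := Σ_{w∈W_U} (−1)^{ℓ(w)} q_w⁻¹ e_w and ã_V := Σ_{w∈W_V} e_w, one has h̃_U · ã_V = 0. -/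
/-!
Choose `i ∈ U ∩ V` and write `s = s_i`. As `W_V` is stable under `w ↦ s w`, pairing `w` with `s w`
in `ã_V` gives `e_s · ã_V = q_s ã_V`. As `W_U` is stable under `w ↦ w s`, pair `w` with `w s`,
say with `ℓ(w s) = ℓ w + 1`: then `e_{ws} = e_w e_s` and `q_{ws} = q_w q_s`, so the two terms of
`h̃_U · ã_V` are `c e_w ã_V` and `-c q_s⁻¹ e_w e_s ã_V = -c e_w ã_V`, which cancel.
-/

open Finsupp

namespace CoxeterSystem

variable {B W : Type*} [Group W] {M : CoxeterMatrix B} (cs : CoxeterSystem M W)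

theorem simple_mul_ne_self (i : B) (w : W) : cs.simple i * w ≠ w := fun h =>
  cs.length_simple_mul_ne w i (congrArg cs.length h)

theorem mul_simple_ne_self (w : W) (i : B) : w * cs.simple i ≠ w := fun h =>
  cs.length_mul_simple_ne w i (congrArg cs.length h)

theorem length_lt_length_simple_mul_of_isReduced_cons {i : B} {ω : List B}
    (h : cs.IsReduced (i :: ω)) :
    cs.length (cs.wordProd ω) < cs.length (cs.simple i * cs.wordProd ω) := by
  have htail : cs.IsReduced ω := by simpa using h.drop 1
  unfold IsReduced at h htail
  rw [wordProd_cons] at h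
  simp only [List.length_cons] at h
  omega

theorem isReduced_append_singleton {ω : List B} {i : B} (hω : cs.IsReduced ω)
    (h : cs.length (cs.wordProd ω) < cs.length (cs.wordProd ω * cs.simple i)) :
    cs.IsReduced (ω ++ [i]) := by
  unfold IsReduced at hω ⊢
  rw [wordProd_append, wordProd_singleton, List.length_append, List.length_singleton]
  have := cs.length_mul_le (cs.wordProd ω) (cs.simple i)
  rw [length_simple] at this
  omega

section Weight

variable {q : B → ℝ} {Q : W → ℝ}

theorem pos_of_eq_prod_of_isReduced (hq0 : ∀ i, 0 < q i)
    (hQ : ∀ ω : List B, cs.IsReduced ω → Q (cs.wordProd ω) = (ω.map q).prod) (w : W) :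
    0 < Q w := by
  obtain ⟨ω, hω, rfl⟩ := cs.exists_isReduced w
  rw [hQ ω hω]
  exact List.prod_pos fun x hx => by
    obtain ⟨i, -, rfl⟩ := List.mem_map.mp hx
    exact hq0 i

theorem mul_simple_eq_of_eq_prod_of_isReduced
    (hQ : ∀ ω : List B, cs.IsReduced ω → Q (cs.wordProd ω) = (ω.map q).prod) {w : W} {i : B}
    (h : cs.length w < cs.length (w * cs.simple i)) : Q (w * cs.simple i) = Q w * q i := by
  obtain ⟨ω, hω, rfl⟩ := cs.exists_isReduced w
  have hQω := hQ _ (cs.isReduced_append_singleton hω h)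
  rw [wordProd_append, wordProd_singleton] at hQω
  rw [hQω, hQ ω hω, List.map_append, List.prod_append]
  simp

theorem neg_one_pow_length_mul_inv_mul_simple (hq0 : ∀ i, 0 < q i)
    (hQ : ∀ ω : List B, cs.IsReduced ω → Q (cs.wordProd ω) = (ω.map q).prod) {w : W} {i : B}
    (h : cs.length w < cs.length (w * cs.simple i)) :
    (-1 : ℝ) ^ cs.length (w * cs.simple i) * (Q (w * cs.simple i))⁻¹ * q i =
      -((-1 : ℝ) ^ cs.length w * (Q w)⁻¹) := by
  have hlen : cs.length (w * cs.simple i) = cs.length w + 1 := by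
    have := cs.length_mul_simple w i
    omega
  have hQw := (cs.pos_of_eq_prod_of_isReduced hq0 hQ w).ne'
  have hqi := (hq0 i).ne'
  rw [hlen, cs.mul_simple_eq_of_eq_prod_of_isReduced hQ h]
  field_simp
  ring

end Weight

section HeckeMul

variable {q : B → ℝ} (mul : (W →₀ ℝ) →ₗ[ℝ] (W →₀ ℝ) →ₗ[ℝ] (W →₀ ℝ))

/-- The Hecke relations only describe left multiplication by `e_s`; right multiplication along a
reduced word follows from them by associativity. -/
theorem mul_single_simple_of_isReduced_append
    (hassoc : ∀ x y z : W →₀ ℝ, mul (mul x y) z = mul x (mul y z))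
    (hone : ∀ x : W →₀ ℝ, mul (single 1 1) x = x)
    (hgt : ∀ (i : B) (w : W), cs.length w < cs.length (cs.simple i * w) →
      mul (single (cs.simple i) 1) (single w 1) = single (cs.simple i * w) 1)
    (i : B) : ∀ {ω : List B}, cs.IsReduced (ω ++ [i]) →
      mul (single (cs.wordProd ω) 1) (single (cs.simple i) 1) =
        single (cs.wordProd ω * cs.simple i) 1
  | [], _ => by simpa using hone _
  | j :: ω, h => by
    have hω : cs.IsReduced (ω ++ [i]) := by simpa using h.drop 1
    have hjω : cs.IsReduced (j :: ω) := by simpa using h.take (ω.length + 1)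
    have hjωi := cs.length_lt_length_simple_mul_of_isReduced_cons (ω := ω ++ [i]) h
    rw [wordProd_append, wordProd_singleton] at hjωi
    rw [wordProd_cons, ← hgt j _ (cs.length_lt_length_simple_mul_of_isReduced_cons hjω), hassoc,
      mul_single_simple_of_isReduced_append hassoc hone hgt i hω, hgt j _ hjωi, mul_assoc]

theorem mul_single_simple_of_length_lt
    (hassoc : ∀ x y z : W →₀ ℝ, mul (mul x y) z = mul x (mul y z))
    (hone : ∀ x : W →₀ ℝ, mul (single 1 1) x = x)
    (hgt : ∀ (i : B) (w : W), cs.length w < cs.length (cs.simple i * w) →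
      mul (single (cs.simple i) 1) (single w 1) = single (cs.simple i * w) 1)
    {w : W} {i : B} (h : cs.length w < cs.length (w * cs.simple i)) :
    mul (single w 1) (single (cs.simple i) 1) = single (w * cs.simple i) 1 := by
  obtain ⟨ω, hω, rfl⟩ := cs.exists_isReduced w
  exact cs.mul_single_simple_of_isReduced_append mul hassoc hone hgt i
    (cs.isReduced_append_singleton hω h)

theorem mul_single_simple_single_add_single_simple_mul
    (hgt : ∀ (i : B) (w : W), cs.length w < cs.length (cs.simple i * w) →
      mul (single (cs.simple i) 1) (single w 1) = single (cs.simple i * w) 1)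
    (hlt : ∀ (i : B) (w : W), cs.length (cs.simple i * w) < cs.length w →
      mul (single (cs.simple i) 1) (single w 1) =
        q i • single (cs.simple i * w) 1 + (q i - 1) • single w 1)
    (i : B) (w : W) :
    mul (single (cs.simple i) 1) (single w 1 + single (cs.simple i * w) 1) =
      q i • (single w 1 + single (cs.simple i * w) 1) := by
  wlog h : cs.length w < cs.length (cs.simple i * w) generalizing w
  · have := this (cs.simple i * w) (by
      rw [simple_mul_simple_cancel_left]
      have := cs.length_simple_mul_ne w i
      omega)
    rwa [simple_mul_simple_cancel_left, add_comm] at this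
  have h' : cs.length (cs.simple i * (cs.simple i * w)) < cs.length (cs.simple i * w) := by
    rwa [simple_mul_simple_cancel_left]
  rw [map_add, hgt i w h, hlt i _ h', simple_mul_simple_cancel_left]
  module

theorem mul_single_simple_sum_single_eq_smul
    (hgt : ∀ (i : B) (w : W), cs.length w < cs.length (cs.simple i * w) →
      mul (single (cs.simple i) 1) (single w 1) = single (cs.simple i * w) 1)
    (hlt : ∀ (i : B) (w : W), cs.length (cs.simple i * w) < cs.length w →
      mul (single (cs.simple i) 1) (single w 1) =
        q i • single (cs.simple i * w) 1 + (q i - 1) • single w 1)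
    {i : B} {F : Finset W} (hF : ∀ w ∈ F, cs.simple i * w ∈ F) :
    mul (single (cs.simple i) 1) (∑ w ∈ F, single w 1) = q i • ∑ w ∈ F, single w 1 := by
  rw [map_sum, Finset.smul_sum, ← sub_eq_zero, ← Finset.sum_sub_distrib]
  refine Finset.sum_involution (fun w _ => cs.simple i * w) (fun w _ => ?_)
    (fun w _ _ => cs.simple_mul_ne_self i w) hF (fun w _ => cs.simple_mul_simple_cancel_left i)
  rw [sub_add_sub_comm, ← map_add, ← smul_add,
    cs.mul_single_simple_single_add_single_simple_mul mul hgt hlt, sub_self]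

theorem mul_single_add_mul_single_mul_simple_eq_zero {Q : W → ℝ} (hq0 : ∀ i, 0 < q i)
    (hQ : ∀ ω : List B, cs.IsReduced ω → Q (cs.wordProd ω) = (ω.map q).prod)
    (hassoc : ∀ x y z : W →₀ ℝ, mul (mul x y) z = mul x (mul y z))
    (hone : ∀ x : W →₀ ℝ, mul (single 1 1) x = x)
    (hgt : ∀ (i : B) (w : W), cs.length w < cs.length (cs.simple i * w) →
      mul (single (cs.simple i) 1) (single w 1) = single (cs.simple i * w) 1)
    {i : B} {a : W →₀ ℝ} (ha : mul (single (cs.simple i) 1) a = q i • a) (w : W) :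
    mul (single w ((-1 : ℝ) ^ cs.length w * (Q w)⁻¹)) a +
      mul (single (w * cs.simple i)
        ((-1 : ℝ) ^ cs.length (w * cs.simple i) * (Q (w * cs.simple i))⁻¹)) a = 0 := by
  wlog h : cs.length w < cs.length (w * cs.simple i) generalizing w
  · have := this (w * cs.simple i) (by
      rw [simple_mul_simple_cancel_right]
      have := cs.length_mul_simple_ne w i
      omega)
    rwa [simple_mul_simple_cancel_right, add_comm] at this
  have hws : mul (single (w * cs.simple i) 1) a = q i • mul (single w 1) a := by
    rw [← cs.mul_single_simple_of_length_lt mul hassoc hone hgt h, hassoc, ha, map_smul]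
  rw [← smul_single_one, ← smul_single_one (b := _ * _), map_smul, map_smul,
    LinearMap.smul_apply, LinearMap.smul_apply, hws, smul_smul,
    cs.neg_one_pow_length_mul_inv_mul_simple hq0 hQ h, neg_smul, add_neg_cancel]

end HeckeMul

end CoxeterSystem

theorem hecke_hTilde_mul_aTilde_eq_zero_general {B : Type*} {W : Type*} [Group W] {M : CoxeterMatrix B}
    (cs : CoxeterSystem M W) (q : B → ℝ)
    (hq0 : ∀ i : B, 0 < q i)
    (Q : W → ℝ)
    (hQ : ∀ ω : List B, cs.IsReduced ω → Q (cs.wordProd ω) = (ω.map q).prod)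
    (mul : (W →₀ ℝ) →ₗ[ℝ] (W →₀ ℝ) →ₗ[ℝ] (W →₀ ℝ))
    (hassoc : ∀ x y z : W →₀ ℝ, mul (mul x y) z = mul x (mul y z))
    (hone : ∀ x : W →₀ ℝ, mul (Finsupp.single 1 1) x = x)
    (hgt : ∀ (i : B) (w : W), cs.length w < cs.length (cs.simple i * w) →
      mul (Finsupp.single (cs.simple i) 1) (Finsupp.single w 1) =
        Finsupp.single (cs.simple i * w) 1)
    (hlt : ∀ (i : B) (w : W), cs.length (cs.simple i * w) < cs.length w →
      mul (Finsupp.single (cs.simple i) 1) (Finsupp.single w 1) =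
        q i • Finsupp.single (cs.simple i * w) 1 + (q i - 1) • Finsupp.single w 1)
    (U V : Set B)
    (hUV : (U ∩ V).Nonempty)
    (hfinU : ((Subgroup.closure (cs.simple '' U) : Subgroup W) : Set W).Finite)
    (hfinV : ((Subgroup.closure (cs.simple '' V) : Subgroup W) : Set W).Finite) :
    mul (∑ w ∈ hfinU.toFinset, Finsupp.single w ((-1 : ℝ) ^ cs.length w * (Q w)⁻¹))
        (∑ w ∈ hfinV.toFinset, Finsupp.single w (1 : ℝ)) = 0 := by
  obtain ⟨i, hiU, hiV⟩ := hUV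
  have hsU : cs.simple i ∈ Subgroup.closure (cs.simple '' U) :=
    Subgroup.subset_closure ⟨i, hiU, rfl⟩
  have hsV : cs.simple i ∈ Subgroup.closure (cs.simple '' V) :=
    Subgroup.subset_closure ⟨i, hiV, rfl⟩
  have habsorb := cs.mul_single_simple_sum_single_eq_smul mul hgt hlt (F := hfinV.toFinset)
    fun w hw => by simpa using Subgroup.mul_mem _ hsV (by simpa using hw)
  rw [map_sum mul, LinearMap.sum_apply]
  exact Finset.sum_involution (fun w _ => w * cs.simple i)
    (fun w _ =>
      cs.mul_single_add_mul_single_mul_simple_eq_zero mul hq0 hQ hassoc hone hgt habsorb w)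
    (fun w _ _ => cs.mul_simple_ne_self w i)
    (fun w hw => by simpa using Subgroup.mul_mem _ (by simpa using hw) hsU)
    (fun w _ => cs.simple_mul_simple_cancel_right i)

/-- **`h̃_U · ã_V = 0` when `U ∩ V ≠ ∅`.**
Let `U, V ⊆ S` be spherical subsets with `U ∩ V ≠ ∅`.  Then in the Hecke algebra `R_q[W]`,
with `h̃_U = Σ_{w ∈ W_U} (-1)^{ℓ w} q_w⁻¹ e_w` and `ã_V = Σ_{w ∈ W_V} e_w`, one has
`h̃_U · ã_V = 0`. -/
theorem hecke_hTilde_mul_aTilde_eq_zero {B : Type*} {W : Type*} [Group W] {M : CoxeterMatrix B}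
    (cs : CoxeterSystem M W) (q : B → ℝ)
    (hq0 : ∀ i : B, 0 < q i)
    (hqconj : ∀ i j : B, IsConj (cs.simple i) (cs.simple j) → q i = q j)
    (Q : W → ℝ)
    (hQ : ∀ ω : List B, cs.IsReduced ω → Q (cs.wordProd ω) = (ω.map q).prod)
    (mul : (W →₀ ℝ) →ₗ[ℝ] (W →₀ ℝ) →ₗ[ℝ] (W →₀ ℝ))
    (hassoc : ∀ x y z : W →₀ ℝ, mul (mul x y) z = mul x (mul y z))
    (hone : ∀ x : W →₀ ℝ, mul (Finsupp.single 1 1) x = x)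
    (hone' : ∀ x : W →₀ ℝ, mul x (Finsupp.single 1 1) = x)
    (hgt : ∀ (i : B) (w : W), cs.length w < cs.length (cs.simple i * w) →
      mul (Finsupp.single (cs.simple i) 1) (Finsupp.single w 1) =
        Finsupp.single (cs.simple i * w) 1)
    (hlt : ∀ (i : B) (w : W), cs.length (cs.simple i * w) < cs.length w →
      mul (Finsupp.single (cs.simple i) 1) (Finsupp.single w 1) =
        q i • Finsupp.single (cs.simple i * w) 1 + (q i - 1) • Finsupp.single w 1)
    (U V : Set B)
    (hUV : (U ∩ V).Nonempty)
    (hfinU : ((Subgroup.closure (cs.simple '' U) : Subgroup W) : Set W).Finite)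
    (hfinV : ((Subgroup.closure (cs.simple '' V) : Subgroup W) : Set W).Finite) :
    mul (∑ w ∈ hfinU.toFinset, Finsupp.single w ((-1 : ℝ) ^ cs.length w * (Q w)⁻¹))
        (∑ w ∈ hfinV.toFinset, Finsupp.single w (1 : ℝ)) = 0 :=
  hecke_hTilde_mul_aTilde_eq_zero_general cs q hq0 Q hQ mul hassoc hone hgt hlt U V hUV hfinU hfinV
end

section
/- Let T ⊆ U ⊆ S with U spherical, and let X_T := {w ∈ W : ℓ(wt) > ℓ(w) for all t ∈ T} be the set of (∅,T)-reduced elements. Then in the Hecke algebra R_q[W], with h̃_V := Σ_{w∈W_V} (−1)^{ℓ(w)} q_w⁻¹ e_w for spherical V, one has h̃_U = (Σ_{v ∈ W_U ∩ X_T} (−1)^{ℓ(v)} q_v⁻¹ e_v) · h̃_T. -/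
/-!
Every element of `W_U` factors uniquely as `v * t` with `v ∈ W_U ∩ X_T` and `t ∈ W_T`, and then
`ℓ (v * t) = ℓ v + ℓ t`. Additivity of length gives `e_v * e_t = e_{vt}` and `q_{vt} = q_v q_t`,
so expanding the right-hand side reproduces, term by term, the sum defining `h̃_U`.

Length additivity comes from the exchange condition, obtained from Tits' sign representation of
`W` on `W × {±1}`. If `m` has minimal length in `m W_T` and `τ` is a shortest word in the letters
`T`, then `ℓ (m * π τ) = ℓ m + |τ|`: the last letter of `τ` can cancel neither against a letter of
`m` (that would shorten `m` within `m W_T`) nor against one of `τ` (as `τ` is shortest). For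
`m = 1` this says shortest `T`-words are reduced, so every `u ≠ 1` in `W_T` has a right descent in
`T`; hence an element without right descents in `T` is minimal in its coset.
-/

namespace CoxeterSystem

open List

variable {B : Type*} {W : Type*} [Group W] {M : CoxeterMatrix B} (cs : CoxeterSystem M W)

local prefix:100 "s " => cs.simple
local prefix:100 "π " => cs.wordProd
local prefix:100 "ℓ " => cs.length
local prefix:100 "ris " => cs.rightInvSeq

theorem rightInvSeq_alternatingWord (i j : B) (k : ℕ) :
    ris (alternatingWord i j k) = (range k).reverse.map (fun n => (s j * s i) ^ n * s j) := by
  induction k generalizing i j with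
  | zero => simp [alternatingWord]
  | succ k ih =>
    rw [alternatingWord_succ, rightInvSeq_concat, ih, range_succ_eq_map, reverse_cons,
      concat_eq_append, map_append]
    simp only [map_reverse, map_map]
    congr 3
    funext n
    simp only [Function.comp_apply, MulAut.conj_apply, inv_simple]
    rw [pow_succ', mul_pow_mul]
    group

theorem prod_map_alternatingWord {G : Type*} [Monoid G] (f : B → G) (i j : B) (k : ℕ) :
    ((alternatingWord i j (2 * k)).map f).prod = (f i * f j) ^ k := by
  induction k with
  | zero => simp [alternatingWord]
  | succ k ih =>
    rw [mul_add_one, alternatingWord_succ', alternatingWord_succ',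
      if_neg (Nat.not_even_iff_odd.mpr (odd_two_mul_add_one k)), if_pos (even_two_mul k),
      map_cons, map_cons, prod_cons, prod_cons, ih, ← mul_assoc, pow_succ']

section SignRepresentation

variable [DecidableEq W]

theorem even_count_rightInvSeq_alternatingWord (i j : B) (t : W) :
    Even ((ris (alternatingWord i j (2 * M i j))).count t) := by
  have hperiodic : ∀ n, (s j * s i) ^ (M i j + n) * s j = (s j * s i) ^ n * s j := by
    intro n
    rw [pow_add, cs.simple_mul_simple_pow', one_mul]
  rw [rightInvSeq_alternatingWord, count_eq_countP, countP_map, countP_reverse, two_mul,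
    range_add, countP_append, countP_map]
  simp only [Function.comp_def, hperiodic]
  exact ⟨_, rfl⟩

noncomputable def reflectionSignPerm (i : B) : Equiv.Perm (W × ℤˣ) :=
  Equiv.prodShear (MulAut.conj (s i)).toEquiv
    (fun t => Equiv.mulLeft (if t = s i then -1 else 1))

theorem prod_map_reflectionSignPerm_apply (ω : List B) (t : W) (ε : ℤˣ) :
    (ω.map cs.reflectionSignPerm).prod (t, ε) =
      (π ω * t * (π ω)⁻¹, (-1) ^ (ris ω).count t * ε) := by
  induction ω with
  | nil => simp
  | cons i ω ih =>
    rw [map_cons, prod_cons, Equiv.Perm.mul_apply, ih]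
    have hfix : π ω * t * (π ω)⁻¹ = s i ↔ (π ω)⁻¹ * s i * π ω = t := by
      constructor <;> intro h
      · rw [← h]; group
      · rw [← h]; group
    simp only [reflectionSignPerm, Equiv.prodShear_apply, MulEquiv.toEquiv_eq_coe,
      MulEquiv.coe_toEquiv, MulAut.conj_apply, Equiv.coe_mulLeft, rightInvSeq, count_cons,
      beq_iff_eq, hfix, wordProd_cons, mul_inv_rev, inv_simple, Prod.mk.injEq]
    constructor
    · group
    · split_ifs <;> simp [pow_succ]

theorem isLiftable_reflectionSignPerm : M.IsLiftable cs.reflectionSignPerm := by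
  intro i j
  rw [← prod_map_alternatingWord]
  ext ⟨t, ε⟩ <;> rw [prod_map_reflectionSignPerm_apply]
  · rw [cs.prod_alternatingWord_eq_mul_pow, if_pos (even_two_mul _),
      Nat.mul_div_cancel_left _ two_pos, cs.simple_mul_simple_pow]
    simp
  · rw [(cs.even_count_rightInvSeq_alternatingWord i j t).neg_one_pow, one_mul]
    rfl

/-- Tits' sign representation: it makes the parity of the number of occurrences of `t` in the
right inversion sequence of `ω` depend only on `π ω`. -/
noncomputable def reflectionSignRep : W →* Equiv.Perm (W × ℤˣ) :=
  cs.lift ⟨cs.reflectionSignPerm, cs.isLiftable_reflectionSignPerm⟩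

theorem reflectionSignRep_wordProd (ω : List B) :
    cs.reflectionSignRep (π ω) = (ω.map cs.reflectionSignPerm).prod := by
  rw [reflectionSignRep, wordProd, map_list_prod, map_map]
  congr 1
  exact map_congr_left fun i _ => cs.lift_apply_simple cs.isLiftable_reflectionSignPerm i

theorem neg_one_pow_count_rightInvSeq_eq {ω ω' : List B} (h : π ω = π ω') (t : W) :
    (-1 : ℤˣ) ^ (ris ω).count t = (-1) ^ (ris ω').count t := by
  have := congrArg (fun g : Equiv.Perm (W × ℤˣ) => (g (t, 1)).2)
    (congrArg cs.reflectionSignRep h)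
  simpa [reflectionSignRep_wordProd, prod_map_reflectionSignPerm_apply] using this

end SignRepresentation

/-- The exchange condition, for arbitrary (not necessarily reduced) words. -/
theorem exists_eraseIdx_of_length_mul_simple_lt {ω : List B} {i : B}
    (h : ℓ (π ω * s i) < ℓ (π ω)) : ∃ r < ω.length, π ω * s i = π (ω.eraseIdx r) := by
  classical
  obtain ⟨α, hα, hαeq⟩ := cs.exists_isReduced (π ω * s i)
  have hnot : s i ∉ ris α := fun hmem => by
    have := (cs.isRightInversion_of_mem_rightInvSeq hα hmem).2
    rw [← hαeq, simple_mul_simple_cancel_right] at this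
    omega
  have hsign := cs.neg_one_pow_count_rightInvSeq_eq
    (show π (ω.concat i) = π α by rw [wordProd_concat, hαeq]) (s i)
  have hconj : ((ris ω).map (MulAut.conj (s i))).count (s i) = (ris ω).count (s i) := by
    simpa using count_map_of_injective (ris ω) _ (MulAut.conj (s i)).injective (s i)
  rw [count_eq_zero_of_not_mem hnot, rightInvSeq_concat, concat_eq_append, count_append,
    hconj, count_singleton_self] at hsign
  have hpos : 0 < (ris ω).count (s i) := by
    refine Nat.pos_of_ne_zero fun h0 => ?_
    rw [h0] at hsign
    exact absurd hsign (by decide)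
  obtain ⟨r, hr, hrs⟩ := mem_iff_getElem.mp (count_pos_iff.mp hpos)
  refine ⟨r, by simpa using hr, ?_⟩
  rw [← cs.wordProd_mul_getD_rightInvSeq, getD_eq_getElem _ _ hr, hrs]

section Parabolic

variable {T : Set B}

theorem wordProd_mem_closure {ω : List B} (hω : ∀ i ∈ ω, i ∈ T) :
    π ω ∈ Subgroup.closure (cs.simple '' T) := by
  refine list_prod_mem fun _ hx => ?_
  obtain ⟨i, hi, rfl⟩ := mem_map.mp hx
  exact Subgroup.subset_closure ⟨i, hω i hi, rfl⟩

theorem exists_wordProd_eq_of_mem_closure {w : W}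
    (hw : w ∈ Subgroup.closure (cs.simple '' T)) : ∃ ω : List B, (∀ i ∈ ω, i ∈ T) ∧ π ω = w := by
  induction hw using Subgroup.closure_induction with
  | mem x hx =>
    obtain ⟨i, hi, rfl⟩ := hx
    exact ⟨[i], by simpa using hi, wordProd_singleton cs i⟩
  | one => exact ⟨[], by simp, wordProd_nil cs⟩
  | mul x y _ _ hx hy =>
    obtain ⟨ω, hω, rfl⟩ := hx
    obtain ⟨ω', hω', rfl⟩ := hy
    refine ⟨ω ++ ω', fun i hi => ?_, wordProd_append cs ω ω'⟩
    exact (mem_append.mp hi).elim (hω i) (hω' i)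
  | inv x _ hx =>
    obtain ⟨ω, hω, rfl⟩ := hx
    exact ⟨ω.reverse, fun i hi => hω i (mem_reverse.mp hi), wordProd_reverse cs ω⟩

def IsShortestWordIn (T : Set B) (τ : List B) : Prop :=
  (∀ i ∈ τ, i ∈ T) ∧ ∀ τ' : List B, (∀ i ∈ τ', i ∈ T) → π τ' = π τ → τ.length ≤ τ'.length

theorem exists_isShortestWordIn {w : W} (hw : w ∈ Subgroup.closure (cs.simple '' T)) :
    ∃ τ, cs.IsShortestWordIn T τ ∧ π τ = w := by
  classical
  have hex : ∃ n, ∃ τ : List B, (∀ i ∈ τ, i ∈ T) ∧ π τ = w ∧ τ.length = n := by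
    obtain ⟨τ, hτ, rfl⟩ := cs.exists_wordProd_eq_of_mem_closure hw
    exact ⟨_, τ, hτ, rfl, rfl⟩
  obtain ⟨τ, hτT, hτw, hτlen⟩ := Nat.find_spec hex
  refine ⟨τ, ⟨hτT, fun τ' hτ'T hτ' => ?_⟩, hτw⟩
  rw [hτlen]
  exact Nat.find_min' hex ⟨τ', hτ'T, hτ'.trans hτw, rfl⟩

variable {cs}

theorem IsShortestWordIn.of_append {τ τ' : List B} (h : cs.IsShortestWordIn T (τ ++ τ')) :
    cs.IsShortestWordIn T τ := by
  refine ⟨fun i hi => h.1 i (mem_append_left τ' hi), fun ρ hρT hρ => ?_⟩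
  have := h.2 (ρ ++ τ') (fun i hi => (mem_append.mp hi).elim (hρT i) (fun hi' =>
    h.1 i (mem_append_right τ hi'))) (by rw [wordProd_append, wordProd_append, hρ])
  simp only [length_append] at this
  omega

theorem IsShortestWordIn.length_mul_wordProd {m : W}
    (hm : ∀ u ∈ Subgroup.closure (cs.simple '' T), ℓ m ≤ ℓ (m * u)) {τ : List B}
    (hτ : cs.IsShortestWordIn T τ) : ℓ (m * π τ) = ℓ m + τ.length := by
  induction τ using List.reverseRecOn with
  | nil => simp
  | append_singleton τ i ih =>
    have hτ' := hτ.of_append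
    have hi : i ∈ T := hτ.1 i (by simp)
    rw [wordProd_append, wordProd_singleton, length_append, length_singleton, ← mul_assoc]
    rcases cs.length_mul_simple (m * π τ) i with hup | hdown
    · rw [hup, ih hτ', add_assoc]
    exfalso
    obtain ⟨μ, hμ, rfl⟩ := cs.exists_isReduced m
    obtain ⟨r, hr, hre⟩ := cs.exists_eraseIdx_of_length_mul_simple_lt (ω := μ ++ τ) (i := i)
      (by rw [wordProd_append]; omega)
    rw [wordProd_append, length_append] at *
    rcases lt_or_ge r μ.length with hrμ | hrμ
    · rw [eraseIdx_append_of_lt_length hrμ, wordProd_append] at hre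
      have hτmem := cs.wordProd_mem_closure hτ'.1
      have hconj := hm (π τ * s i * (π τ)⁻¹) (mul_mem (mul_mem hτmem
        (Subgroup.subset_closure ⟨i, hi, rfl⟩)) (inv_mem hτmem))
      rw [← mul_assoc, ← mul_assoc, hre, mul_inv_cancel_right] at hconj
      have := cs.length_wordProd_le (μ.eraseIdx r)
      rw [length_eraseIdx_of_lt hrμ] at this
      have := hμ.eq
      omega
    · rw [eraseIdx_append_of_length_le hrμ, wordProd_append, mul_assoc] at hre
      have hshorter := hτ.2 (τ.eraseIdx (r - μ.length))
        (fun j hj => hτ'.1 j (eraseIdx_subset hj))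
        (by rw [wordProd_append, wordProd_singleton, mul_left_cancel hre])
      rw [length_append, length_singleton, length_eraseIdx_of_lt (by omega)] at hshorter
      omega

theorem IsShortestWordIn.isReduced {τ : List B} (hτ : cs.IsShortestWordIn T τ) :
    cs.IsReduced τ := by
  simpa [IsReduced] using hτ.length_mul_wordProd (m := 1) (fun u _ => by simp)

variable (cs)

theorem length_mul_of_forall_length_le_mul {m : W}
    (hm : ∀ u ∈ Subgroup.closure (cs.simple '' T), ℓ m ≤ ℓ (m * u)) {t : W}
    (ht : t ∈ Subgroup.closure (cs.simple '' T)) : ℓ (m * t) = ℓ m + ℓ t := by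
  obtain ⟨τ, hτ, rfl⟩ := cs.exists_isShortestWordIn ht
  rw [hτ.length_mul_wordProd hm, hτ.isReduced.eq]

theorem exists_mem_length_mul_simple_lt_of_mem_closure {u : W}
    (hu : u ∈ Subgroup.closure (cs.simple '' T)) (hu1 : u ≠ 1) :
    ∃ i ∈ T, ℓ (u * s i) < ℓ u := by
  obtain ⟨τ, hτ, rfl⟩ := cs.exists_isShortestWordIn hu
  obtain rfl | ⟨τ', i, rfl⟩ := τ.eq_nil_or_concat
  · exact absurd (wordProd_nil cs) hu1
  refine ⟨i, hτ.1 i (by simp), ?_⟩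
  rw [wordProd_concat, simple_mul_simple_cancel_right, ← wordProd_concat, hτ.isReduced.eq]
  have := cs.length_wordProd_le τ'
  simp only [concat_eq_append, length_append, length_singleton]
  omega

theorem exists_forall_length_mul_le (w : W) (H : Subgroup W) :
    ∃ u ∈ H, ∀ u' ∈ H, ℓ (w * u) ≤ ℓ (w * u') :=
  ⟨_, Function.argminOn_mem (fun u => ℓ (w * u)) (H : Set W) ⟨1, H.one_mem⟩,
    fun _ hu' => Function.argminOn_le (fun u => ℓ (w * u)) (H : Set W) hu'⟩

theorem length_mul_of_forall_length_lt_mul_simple {v : W} (hv : ∀ i ∈ T, ℓ v < ℓ (v * s i))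
    {t : W} (ht : t ∈ Subgroup.closure (cs.simple '' T)) : ℓ (v * t) = ℓ v + ℓ t := by
  obtain ⟨u, hu, hmin⟩ := cs.exists_forall_length_mul_le v (Subgroup.closure (cs.simple '' T))
  have hm : ∀ u' ∈ Subgroup.closure (cs.simple '' T), ℓ (v * u) ≤ ℓ (v * u * u') :=
    fun u' hu' => by rw [mul_assoc]; exact hmin _ (mul_mem hu hu')
  obtain rfl : u = 1 := by
    by_contra hu1
    obtain ⟨i, hi, hlt⟩ :=
      cs.exists_mem_length_mul_simple_lt_of_mem_closure (inv_mem hu) (inv_ne_one.mpr hu1)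
    have h1 := cs.length_mul_of_forall_length_le_mul hm (inv_mem hu)
    have h2 := cs.length_mul_of_forall_length_le_mul hm
      (mul_mem (inv_mem hu) (Subgroup.subset_closure ⟨i, hi, rfl⟩))
    rw [mul_inv_cancel_right] at h1
    rw [← mul_assoc, mul_inv_cancel_right] at h2
    have := hv i hi
    omega
  simp only [mul_one] at hm
  exact cs.length_mul_of_forall_length_le_mul hm ht

theorem bijOn_mul_of_closure_le {H : Subgroup W} (hTH : Subgroup.closure (cs.simple '' T) ≤ H) :
    Set.BijOn (fun p : W × W => p.1 * p.2)
      ({v ∈ (H : Set W) | ∀ i ∈ T, ℓ v < ℓ (v * s i)} ×ˢ Subgroup.closure (cs.simple '' T)) H := by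
  refine ⟨?_, ?_, ?_⟩
  · rintro ⟨v, t⟩ ⟨⟨hv, -⟩, ht⟩
    exact mul_mem hv (hTH ht)
  · rintro ⟨v, t⟩ ⟨⟨-, hv : ∀ i ∈ T, ℓ v < ℓ (v * s i)⟩, ht : t ∈ _⟩
      ⟨v', t'⟩ ⟨⟨-, hv' : ∀ i ∈ T, ℓ v' < ℓ (v' * s i)⟩, ht' : t' ∈ _⟩ (h : v * t = v' * t')
    have h1 := cs.length_mul_of_forall_length_lt_mul_simple hv (mul_mem ht (inv_mem ht'))
    have h2 := cs.length_mul_of_forall_length_lt_mul_simple hv' (mul_mem ht' (inv_mem ht))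
    rw [← mul_assoc, h, mul_inv_cancel_right] at h1
    rw [← mul_assoc, ← h, mul_inv_cancel_right] at h2
    obtain rfl : t = t' := mul_inv_eq_one.mp (cs.length_eq_zero_iff.mp (by omega))
    rw [mul_right_cancel h]
  · intro w hw
    obtain ⟨u, hu, hmin⟩ := cs.exists_forall_length_mul_le w (Subgroup.closure (cs.simple '' T))
    refine ⟨(w * u, u⁻¹), ⟨⟨mul_mem hw (hTH hu), fun i hi => ?_⟩, inv_mem hu⟩, by simp⟩
    show ℓ (w * u) < ℓ (w * u * s i)
    have := hmin (u * s i) (mul_mem hu (Subgroup.subset_closure ⟨i, hi, rfl⟩))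
    rw [← mul_assoc] at this
    have := cs.length_mul_simple_ne (w * u) i
    omega

end Parabolic

section HeckeAlgebra

open Finsupp

variable {R : Type*} [CommSemiring R]

theorem single_one_mul_single_one_of_length_mul_eq
    (mul : (W →₀ R) →ₗ[R] (W →₀ R) →ₗ[R] (W →₀ R))
    (hassoc : ∀ x y z : W →₀ R, mul (mul x y) z = mul x (mul y z))
    (hone : ∀ x : W →₀ R, mul (single 1 1) x = x)
    (hgt : ∀ (i : B) (w : W), ℓ w < ℓ (s i * w) →
      mul (single (s i) 1) (single w 1) = single (s i * w) 1)
    {v t : W} (h : ℓ (v * t) = ℓ v + ℓ t) :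
    mul (single v 1) (single t 1) = single (v * t) 1 := by
  obtain ⟨ω, hω, rfl⟩ := cs.exists_isReduced v
  rw [hω.eq] at h
  clear hω
  induction ω generalizing t with
  | nil => rw [wordProd_nil, one_mul, hone]
  | cons i ω ih =>
    rw [wordProd_cons, mul_assoc] at h ⊢
    rw [length_cons] at h
    have hωt : ℓ (π ω * t) = ω.length + ℓ t := by
      have := cs.length_simple_mul (π ω * t) i
      have := cs.length_mul_le (π ω) t
      have := cs.length_wordProd_le ω
      omega
    have hω : ℓ (π ω) < ℓ (s i * π ω) := by
      have := cs.length_wordProd_le ω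
      have := cs.length_mul_le (s i * π ω) t
      rw [mul_assoc] at this
      omega
    rw [← hgt i _ hω, hassoc, ih hωt, hgt i _ (by omega)]

theorem single_mul_single_of_length_mul_eq
    (mul : (W →₀ R) →ₗ[R] (W →₀ R) →ₗ[R] (W →₀ R))
    (hassoc : ∀ x y z : W →₀ R, mul (mul x y) z = mul x (mul y z))
    (hone : ∀ x : W →₀ R, mul (single 1 1) x = x)
    (hgt : ∀ (i : B) (w : W), ℓ w < ℓ (s i * w) →
      mul (single (s i) 1) (single w 1) = single (s i * w) 1)
    {v t : W} (h : ℓ (v * t) = ℓ v + ℓ t) (a b : R) :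
    mul (single v a) (single t b) = single (v * t) (a * b) := by
  rw [← smul_single_one v a, ← smul_single_one t b]
  simp only [map_smul, LinearMap.smul_apply]
  rw [cs.single_one_mul_single_one_of_length_mul_eq mul hassoc hone hgt h, smul_smul,
    smul_single_one, mul_comm]

end HeckeAlgebra

theorem apply_mul_of_length_mul_eq {R : Type*} [Monoid R] {q : B → R} {Q : W → R}
    (hQ : ∀ ω : List B, cs.IsReduced ω → Q (π ω) = (ω.map q).prod) {v t : W}
    (h : ℓ (v * t) = ℓ v + ℓ t) : Q (v * t) = Q v * Q t := by
  obtain ⟨ω, hω, rfl⟩ := cs.exists_isReduced v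
  obtain ⟨ω', hω', rfl⟩ := cs.exists_isReduced t
  have hred : cs.IsReduced (ω ++ ω') := by
    rw [IsReduced, wordProd_append, h, hω.eq, hω'.eq, length_append]
  rw [← wordProd_append, hQ _ hred, hQ _ hω, hQ _ hω', map_append, prod_append]

end CoxeterSystem

open scoped Classical in
theorem hecke_hTilde_factorization_general {B : Type*} {W : Type*} [Group W] {M : CoxeterMatrix B}
    (cs : CoxeterSystem M W) (q : B → ℝ)
    (Q : W → ℝ)
    (hQ : ∀ ω : List B, cs.IsReduced ω → Q (cs.wordProd ω) = (ω.map q).prod)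
    (mul : (W →₀ ℝ) →ₗ[ℝ] (W →₀ ℝ) →ₗ[ℝ] (W →₀ ℝ))
    (hassoc : ∀ x y z : W →₀ ℝ, mul (mul x y) z = mul x (mul y z))
    (hone : ∀ x : W →₀ ℝ, mul (Finsupp.single 1 1) x = x)
    (hgt : ∀ (i : B) (w : W), cs.length w < cs.length (cs.simple i * w) →
      mul (Finsupp.single (cs.simple i) 1) (Finsupp.single w 1) =
        Finsupp.single (cs.simple i * w) 1)
    (T U : Set B) (hTU : T ⊆ U)
    (hfinU : ((Subgroup.closure (cs.simple '' U) : Subgroup W) : Set W).Finite)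
    (hfinT : ((Subgroup.closure (cs.simple '' T) : Subgroup W) : Set W).Finite) :
    (∑ w ∈ hfinU.toFinset, Finsupp.single w ((-1 : ℝ) ^ cs.length w * (Q w)⁻¹)) =
      mul
        (∑ v ∈ hfinU.toFinset.filter
            (fun v => ∀ i ∈ T, cs.length v < cs.length (v * cs.simple i)),
          Finsupp.single v ((-1 : ℝ) ^ cs.length v * (Q v)⁻¹))
        (∑ w ∈ hfinT.toFinset, Finsupp.single w ((-1 : ℝ) ^ cs.length w * (Q w)⁻¹)) := by
  have hbij := cs.bijOn_mul_of_closure_le (Subgroup.closure_mono (Set.image_mono hTU))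
  rw [map_sum mul, LinearMap.sum_apply]
  simp only [map_sum]
  rw [← Finset.sum_product']
  refine (Finset.sum_nbij (fun p => p.1 * p.2) (fun p hp => ?_) ?_ ?_ fun p hp => ?_).symm
  · simpa using hbij.mapsTo (by simpa using hp)
  · simpa using hbij.injOn
  · simpa using hbij.surjOn
  · simp only [Finset.mem_product, Finset.mem_filter, Set.Finite.mem_toFinset] at hp
    have hlen := cs.length_mul_of_forall_length_lt_mul_simple hp.1.2 hp.2
    rw [cs.single_mul_single_of_length_mul_eq mul hassoc hone hgt hlen, hlen,
      cs.apply_mul_of_length_mul_eq hQ hlen, pow_add, mul_inv]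
    congr 1
    ring

open scoped Classical in
/-- **Factorization `h̃_U = (Σ_{v ∈ W_U ∩ X_T} (-1)^{ℓ v} q_v⁻¹ e_v) · h̃_T`.**
Let `T ⊆ U ⊆ S` with `U` spherical, and let
`X_T = {w ∈ W : ℓ(wt) > ℓ(w) for all t ∈ T}` be the set of `(∅,T)`-reduced elements.
Then in the Hecke algebra `R_q[W]`, with `h̃_V = Σ_{w ∈ W_V} (-1)^{ℓ w} q_w⁻¹ e_w`, one has
`h̃_U = (Σ_{v ∈ W_U ∩ X_T} (-1)^{ℓ v} q_v⁻¹ e_v) · h̃_T`. -/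
theorem hecke_hTilde_factorization {B : Type*} {W : Type*} [Group W] {M : CoxeterMatrix B}
    (cs : CoxeterSystem M W) (q : B → ℝ)
    (hq0 : ∀ i : B, 0 < q i)
    (hqconj : ∀ i j : B, IsConj (cs.simple i) (cs.simple j) → q i = q j)
    (Q : W → ℝ)
    (hQ : ∀ ω : List B, cs.IsReduced ω → Q (cs.wordProd ω) = (ω.map q).prod)
    (mul : (W →₀ ℝ) →ₗ[ℝ] (W →₀ ℝ) →ₗ[ℝ] (W →₀ ℝ))
    (hassoc : ∀ x y z : W →₀ ℝ, mul (mul x y) z = mul x (mul y z))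
    (hone : ∀ x : W →₀ ℝ, mul (Finsupp.single 1 1) x = x)
    (hone' : ∀ x : W →₀ ℝ, mul x (Finsupp.single 1 1) = x)
    (hgt : ∀ (i : B) (w : W), cs.length w < cs.length (cs.simple i * w) →
      mul (Finsupp.single (cs.simple i) 1) (Finsupp.single w 1) =
        Finsupp.single (cs.simple i * w) 1)
    (hlt : ∀ (i : B) (w : W), cs.length (cs.simple i * w) < cs.length w →
      mul (Finsupp.single (cs.simple i) 1) (Finsupp.single w 1) =
        q i • Finsupp.single (cs.simple i * w) 1 + (q i - 1) • Finsupp.single w 1)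
    (T U : Set B) (hTU : T ⊆ U)
    (hfinU : ((Subgroup.closure (cs.simple '' U) : Subgroup W) : Set W).Finite)
    (hfinT : ((Subgroup.closure (cs.simple '' T) : Subgroup W) : Set W).Finite) :
    (∑ w ∈ hfinU.toFinset, Finsupp.single w ((-1 : ℝ) ^ cs.length w * (Q w)⁻¹)) =
      mul
        (∑ v ∈ hfinU.toFinset.filter
            (fun v => ∀ i ∈ T, cs.length v < cs.length (v * cs.simple i)),
          Finsupp.single v ((-1 : ℝ) ^ cs.length v * (Q v)⁻¹))
        (∑ w ∈ hfinT.toFinset, Finsupp.single w ((-1 : ℝ) ^ cs.length w * (Q w)⁻¹)) :=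
  hecke_hTilde_factorization_general cs q Q hQ mul hassoc hone hgt T U hTU hfinU hfinT
end

section
/- Let (W,S) be a Coxeter system with S finite and W infinite, and let ρ := sup{x ∈ ℝ, x ≥ 0 : the family (x^{ℓ(w)})_{w∈W} is summable} be the radius of convergence of the growth series of W. Then the growth series diverges at its radius of convergence: the family (ρ^{ℓ(w)})_{w∈W} is not summable (equivalently, 1/W(ρ) = 0). -/
/-!
Let `a n` be the number of elements of length `n`. Splitting a reduced word of length `m + n`
shows `a (m + n) ≤ a m * a n`. If the growth series converged at `ρ`, some term `a N * ρ ^ N`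
with `N ≥ 1` would be `< 1`, and by continuity so would `a N * y ^ N` for some `y > ρ`.
Submultiplicativity then bounds `a n * y ^ n` by a geometric sequence in `n / N`, so the series
converges at `y`, contradicting the definition of `ρ` (which is finite because `W` is infinite).
-/

open Filter Topology

lemma Summable.comp_div_const {f : ℕ → ℝ} (hf : Summable f) (hf0 : ∀ n, 0 ≤ f n)
    (N : ℕ) [NeZero N] : Summable fun m => f (m / N) := by
  have hprod : Summable fun p : ℕ × Fin N => f p.1 * 1 :=
    hf.mul_of_nonneg (Summable.of_finite (f := fun _ : Fin N => (1 : ℝ))) hf0 fun _ => zero_le_one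
  simpa [Function.comp_def, Nat.divModEquiv] using
    (Nat.divModEquiv N).summable_iff.mpr hprod

section Submultiplicative

variable {b : ℕ → ℝ}

lemma le_pow_mul_of_submultiplicative (hb : ∀ n, 0 ≤ b n)
    (hmul : ∀ m n, b (m + n) ≤ b m * b n) (N k r : ℕ) :
    b (k * N + r) ≤ b N ^ k * b r := by
  induction k with
  | zero => simp
  | succ k ih =>
    calc b ((k + 1) * N + r) = b (N + (k * N + r)) := by ring_nf
      _ ≤ b N * b (k * N + r) := hmul _ _
      _ ≤ b N * (b N ^ k * b r) := mul_le_mul_of_nonneg_left ih (hb N)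
      _ = b N ^ (k + 1) * b r := by ring

lemma summable_of_submultiplicative (hb : ∀ n, 0 ≤ b n)
    (hmul : ∀ m n, b (m + n) ≤ b m * b n) {N : ℕ} (hN : N ≠ 0) (hbN : b N < 1) :
    Summable b := by
  have : NeZero N := ⟨hN⟩
  set C := ∑ r ∈ Finset.range N, b r
  have hbound : ∀ m, b m ≤ C * b N ^ (m / N) := fun m => calc
    b m = b (m / N * N + m % N) := by rw [Nat.div_add_mod']
    _ ≤ b N ^ (m / N) * b (m % N) := le_pow_mul_of_submultiplicative hb hmul _ _ _
    _ ≤ b N ^ (m / N) * C := by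
        gcongr
        · exact pow_nonneg (hb N) _
        · exact Finset.single_le_sum (fun r _ => hb r)
            (Finset.mem_range.mpr (Nat.mod_lt _ (Nat.pos_of_ne_zero hN)))
    _ = C * b N ^ (m / N) := mul_comm _ _
  exact Summable.of_nonneg_of_le hb hbound
    (((summable_geometric_of_lt_one (hb N) hbN).comp_div_const
      (fun _ => pow_nonneg (hb N) _) N).mul_left C)

theorem exists_lt_summable_mul_pow_of_submultiplicative {a : ℕ → ℝ} (ha : ∀ n, 0 ≤ a n)
    (hmul : ∀ m n, a (m + n) ≤ a m * a n) {x : ℝ} (hx : 0 ≤ x)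
    (hsum : Summable fun n => a n * x ^ n) :
    ∃ y, x < y ∧ Summable fun n => a n * y ^ n := by
  obtain ⟨N, hN, hxN⟩ := ((eventually_ge_atTop 1).and
    (hsum.tendsto_atTop_zero.eventually_lt_const one_pos)).exists
  have hnear : ∀ᶠ y in 𝓝[>] x, a N * y ^ N < 1 :=
    nhdsWithin_le_nhds <|
      ((continuous_const.mul (continuous_pow N)).tendsto x).eventually_lt_const hxN
  obtain ⟨y, hyN, hxy⟩ := (hnear.and self_mem_nhdsWithin).exists
  have hy : 0 ≤ y := hx.trans hxy.le
  refine ⟨y, hxy, summable_of_submultiplicative (fun n => mul_nonneg (ha n) (pow_nonneg hy n))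
    (fun m n => ?_) (by omega : N ≠ 0) hyN⟩
  calc a (m + n) * y ^ (m + n) ≤ a m * a n * y ^ (m + n) :=
        mul_le_mul_of_nonneg_right (hmul m n) (pow_nonneg hy _)
    _ = a m * y ^ m * (a n * y ^ n) := by ring

end Submultiplicative

theorem summable_comp_iff_summable_natCard_fiber_mul {ι : Type*} {f : ι → ℕ}
    (hf : ∀ n, (f ⁻¹' {n}).Finite) {g : ℕ → ℝ} (hg : ∀ n, 0 ≤ g n) :
    Summable (g ∘ f) ↔ Summable fun n => Nat.card (f ⁻¹' {n}) * g n := by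
  have hcomp : (g ∘ f) ∘ Equiv.sigmaFiberEquiv f = fun p => g p.1 := by
    funext ⟨n, i, hi⟩
    simp [hi]
  rw [← (Equiv.sigmaFiberEquiv f).summable_iff, hcomp,
    summable_sigma_of_nonneg fun p => hg p.1]
  have hfiber (n : ℕ) : Summable fun _ : {i // f i = n} => g n :=
    have : Finite {i // f i = n} := (hf n).to_subtype
    Summable.of_finite
  simp only [tsum_const, nsmul_eq_mul]
  exact and_iff_right hfiber

lemma lt_one_of_summable_pow {ι : Type*} [Infinite ι] {f : ι → ℕ} {x : ℝ}
    (h : Summable fun i => x ^ f i) : x < 1 := by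
  by_contra! hx
  obtain ⟨i, hi⟩ := (h.tendsto_cofinite_zero.eventually_lt_const one_pos).exists
  exact hi.not_ge (one_le_pow₀ hx)

namespace CoxeterSystem

open scoped Pointwise

variable {B W : Type*} [Group W] {M : CoxeterMatrix B} (cs : CoxeterSystem M W)

def sphere (n : ℕ) : Set W := cs.length ⁻¹' {n}

lemma finite_sphere [Finite B] (n : ℕ) : (cs.sphere n).Finite := by
  refine ((List.finite_length_eq B n).image cs.wordProd).subset fun w hw => ?_
  obtain ⟨ω, hω, rfl⟩ := cs.exists_isReduced w
  exact ⟨ω, hω.eq.symm.trans hw, rfl⟩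

lemma sphere_add_subset_mul (m n : ℕ) : cs.sphere (m + n) ⊆ cs.sphere m * cs.sphere n := by
  intro w hw
  obtain ⟨ω, hω, rfl⟩ := cs.exists_isReduced w
  have hlen : ω.length = m + n := hω.eq.symm.trans hw
  refine ⟨cs.wordProd (ω.take m), ?_, cs.wordProd (ω.drop m), ?_, ?_⟩
  · change cs.length _ = m
    rw [(hω.take m).eq, List.length_take, hlen]
    omega
  · change cs.length _ = n
    rw [(hω.drop m).eq, List.length_drop, hlen]
    omega
  · exact (cs.wordProd_append _ _).symm.trans (congrArg cs.wordProd (List.take_append_drop m ω))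

lemma natCard_sphere_add_le [Finite B] (m n : ℕ) :
    Nat.card (cs.sphere (m + n)) ≤ Nat.card (cs.sphere m) * Nat.card (cs.sphere n) :=
  (Nat.card_mono ((cs.finite_sphere m).mul (cs.finite_sphere n))
    (cs.sphere_add_subset_mul m n)).trans Set.natCard_mul_le

theorem exists_lt_summable_pow_length [Finite B] {x : ℝ} (hx : 0 ≤ x)
    (h : Summable fun w => x ^ cs.length w) :
    ∃ y, x < y ∧ Summable fun w => y ^ cs.length w := by
  have hseries {y : ℝ} (hy : 0 ≤ y) := summable_comp_iff_summable_natCard_fiber_mul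
    (g := fun n => y ^ n) cs.finite_sphere fun n => pow_nonneg hy n
  obtain ⟨y, hxy, hy⟩ := exists_lt_summable_mul_pow_of_submultiplicative
    (fun _ => Nat.cast_nonneg _) (fun m n => by exact_mod_cast cs.natCard_sphere_add_le m n)
    hx ((hseries hx).mp h)
  exact ⟨y, hxy, (hseries (hx.trans hxy.le)).mpr hy⟩

end CoxeterSystem

/-- **The growth series diverges at its radius of convergence.**
Let `(W, S)` be a Coxeter system with `S` finite and `W` infinite, and let
`ρ = sup {x ≥ 0 : (x^{ℓ w})_{w ∈ W} is summable}` be the radius of convergence of the growth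
series of `W`.  Then the family `(ρ^{ℓ w})_{w ∈ W}` is not summable
(equivalently, `1/W(ρ) = 0`). -/
theorem growth_series_diverges_at_radius {B : Type*} [Fintype B] {W : Type*} [Group W]
    [Infinite W] {M : CoxeterMatrix B} (cs : CoxeterSystem M W) :
    ¬ Summable (fun w : W =>
      (sSup {x : ℝ | 0 ≤ x ∧ Summable (fun w : W => x ^ cs.length w)}) ^ cs.length w) := by
  set S := {x : ℝ | 0 ≤ x ∧ Summable fun w : W => x ^ cs.length w}
  have hS : BddAbove S := ⟨1, fun x hx => (lt_one_of_summable_pow hx.2).le⟩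
  have hρ : 0 ≤ sSup S := Real.sSup_nonneg fun x hx => hx.1
  intro hsum
  obtain ⟨y, hlt, hy⟩ := cs.exists_lt_summable_pow_length hρ hsum
  exact hlt.not_ge (le_csSup hS ⟨hρ.trans hlt.le, hy⟩)
end

section
/- Let Y be a real Hilbert space, X a closed subspace of Y, P_X : Y → Y the orthogonal projection onto X, and y ∈ Y a unit vector. Define A(y) ∈ [0,∞] as the infimum of {‖x‖ : x ∈ X, ⟨x,y⟩ = 1}, with the convention that the infimum of the empty set is +∞. Then ⟨P_X(y), y⟩ = A(y)⁻², with the convention (+∞)⁻² = 0. -/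
/-! Since `y - v ⊥ X`, the functionals `⟪·, y⟫` and `⟪·, v⟫` agree on `X`, so the constraint set is
`{x ∈ X | ⟪x, v⟫ = 1}`. By Cauchy–Schwarz every such `x` has `‖x‖ ≥ ‖v‖⁻¹`, with equality at
`x = v / ‖v‖²`; hence `A(y) = ‖v‖⁻¹` and `A(y)⁻² = ‖v‖² = ⟪v, y⟫`. For `v = 0` the set is empty and
both sides vanish. -/

open scoped InnerProductSpace

section

variable {E : Type*} [NormedAddCommGroup E] [InnerProductSpace ℝ E]

theorem Submodule.inner_eq_inner_of_sub_mem_orthogonal {K : Submodule ℝ E} {x y v : E}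
    (hx : x ∈ K) (hperp : y - v ∈ Kᗮ) : ⟪x, y⟫_ℝ = ⟪x, v⟫_ℝ := by
  have h : ⟪x, y - v⟫_ℝ = 0 := (K.mem_orthogonal (y - v)).mp hperp x hx
  rwa [inner_sub_right, sub_eq_zero] at h

theorem Submodule.iInf_norm_of_inner_eq_one (K : Submodule ℝ E) {v : E} (hv : v ∈ K) :
    ⨅ x ∈ {x : E | x ∈ K ∧ ⟪x, v⟫_ℝ = 1}, ENNReal.ofReal ‖x‖ = (ENNReal.ofReal ‖v‖)⁻¹ := by
  rcases eq_or_ne v 0 with rfl | hv0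
  · simp
  have hnorm : 0 < ‖v‖ := norm_pos_iff.mpr hv0
  rw [← ENNReal.ofReal_inv_of_pos hnorm]
  apply le_antisymm
  · have hmem : (‖v‖ ^ 2)⁻¹ • v ∈ {x : E | x ∈ K ∧ ⟪x, v⟫_ℝ = 1} := by
      refine ⟨K.smul_mem _ hv, ?_⟩
      rw [real_inner_smul_left, real_inner_self_eq_norm_sq]
      field_simp
    calc ⨅ x ∈ {x : E | x ∈ K ∧ ⟪x, v⟫_ℝ = 1}, ENNReal.ofReal ‖x‖
        ≤ ENNReal.ofReal ‖(‖v‖ ^ 2)⁻¹ • v‖ := biInf_le _ hmem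
      _ = ENNReal.ofReal ‖v‖⁻¹ := by
        rw [norm_smul, Real.norm_of_nonneg (by positivity)]
        field_simp
  · refine le_iInf₂ fun x ⟨_, hxv⟩ => ENNReal.ofReal_le_ofReal ?_
    rw [inv_le_iff_one_le_mul₀ hnorm, ← hxv]
    exact real_inner_le_norm x v

end

theorem hilbert_projection_inf_formula_general {Y : Type*} [NormedAddCommGroup Y]
    [InnerProductSpace ℝ Y]
    (X : Submodule ℝ Y)
    (y : Y)
    (v : Y) (hvX : v ∈ X) (hperp : y - v ∈ Xᗮ) :
    ENNReal.ofReal (inner ℝ v y : ℝ) =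
      (⨅ x ∈ {x : Y | x ∈ X ∧ (inner ℝ x y : ℝ) = 1}, ENNReal.ofReal ‖x‖)⁻¹ ^ 2 := by
  have hset : {x : Y | x ∈ X ∧ ⟪x, y⟫_ℝ = 1} = {x : Y | x ∈ X ∧ ⟪x, v⟫_ℝ = 1} :=
    Set.ext fun _ => and_congr_right fun hx => by
      rw [Submodule.inner_eq_inner_of_sub_mem_orthogonal hx hperp]
  rw [hset, X.iInf_norm_of_inner_eq_one hvX, inv_inv, ← ENNReal.ofReal_pow (norm_nonneg v),
    ← real_inner_self_eq_norm_sq, Submodule.inner_eq_inner_of_sub_mem_orthogonal hvX hperp]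

/-- **A Hilbert space projection formula.**
Let `Y` be a real Hilbert space, `X` a closed subspace of `Y`, and `y ∈ Y` a unit vector.
Let `v = P_X y` be the orthogonal projection of `y` onto `X` (characterized by `v ∈ X` and
`y - v ∈ Xᗮ`).  Define `A(y) ∈ [0,∞]` as the infimum of `{‖x‖ : x ∈ X, ⟨x,y⟩ = 1}` (with the
infimum of the empty set being `+∞`).  Then `⟨P_X y, y⟩ = A(y)⁻²`, with the convention
`(+∞)⁻² = 0`. -/
theorem hilbert_projection_inf_formula {Y : Type*} [NormedAddCommGroup Y]
    [InnerProductSpace ℝ Y] [CompleteSpace Y]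
    (X : Submodule ℝ Y) (hX : IsClosed (X : Set Y))
    (y : Y) (hy : ‖y‖ = 1)
    (v : Y) (hvX : v ∈ X) (hperp : y - v ∈ Xᗮ) :
    ENNReal.ofReal (inner ℝ v y : ℝ) =
      (⨅ x ∈ {x : Y | x ∈ X ∧ (inner ℝ x y : ℝ) = 1}, ENNReal.ofReal ‖x‖)⁻¹ ^ 2 :=
  hilbert_projection_inf_formula_general X y v hvX hperp
end
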